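/- arXiv:2604.26550 — 6 statements merged into one kernel-verified Lean document; each statement's English description precedes it below -/
import Mathlib

section
/- Let n ≥ 2, 1 ≤ l ≤ n−1, u = n − l, and y ∈ ℝⁿ. Let S ↦ f_S be a map from size-l subsets of {1,…,n} to ℝⁿ that is uniformly β-stable with respect to the squared loss and labels y, and suppose |f_S(i) − y_i| ≤ c for every size-l subset S and every i ∈ {1,…,n}. Then for any δ > 0, with probability at least 1 − δ over a subset S drawn uniformly at random from the size-l subsets of {1,…,n}: R_S(f_S) ≤ R̂_S(f_S) + β + (2β + c²(l+u)/(lu))·√(π(l,u)·ln(1/δ)/2). -/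
open Matrix BigOperators Finset
open scoped Classical

noncomputable section

/-- The Laplacian of a weighted graph given by its adjacency matrix. -/
def Lap {n : ℕ} (A : Matrix (Fin n) (Fin n) ℝ) : Matrix (Fin n) (Fin n) ℝ :=
  Matrix.diagonal (fun i => ∑ j, A i j) - A

/-- `A` is a weighted graph adjacency matrix: symmetric, nonnegative, zero diagonal. -/
def IsWeightedGraph {n : ℕ} (A : Matrix (Fin n) (Fin n) ℝ) : Prop :=
  A.IsSymm ∧ (∀ i j, 0 ≤ A i j) ∧ (∀ i, A i i = 0)

/-- The graph with edge set `{(i,j) : A i j > 0}` is connected. -/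
def GraphConnected {n : ℕ} (A : Matrix (Fin n) (Fin n) ℝ) : Prop :=
  (SimpleGraph.fromRel (fun i j => 0 < A i j)).Connected

/-- `LH` is the Laplacian of a `(1±ε)`-spectral sparsifier of the graph with Laplacian `LG`. -/
def IsSparsifier {n : ℕ} (LG LH : Matrix (Fin n) (Fin n) ℝ) (ε : ℝ) : Prop :=
  ∀ x : Fin n → ℝ,
    (1 - ε) * (x ⬝ᵥ LG.mulVec x) ≤ x ⬝ᵥ LH.mulVec x ∧
    x ⬝ᵥ LH.mulVec x ≤ (1 + ε) * (x ⬝ᵥ LG.mulVec x)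

/-- Orthogonal projection `I - (1/n)·1·1ᵀ` onto `F = {f : ⟨f,1⟩ = 0}`. -/
def PF (n : ℕ) : Matrix (Fin n) (Fin n) ℝ :=
  1 - (n : ℝ)⁻¹ • Matrix.of (fun _ _ => (1 : ℝ))

/-- Diagonal 0/1 matrix selecting the coordinates in `S`. -/
def IS {n : ℕ} (S : Finset (Fin n)) : Matrix (Fin n) (Fin n) ℝ :=
  Matrix.diagonal (fun i => if i ∈ S then (1 : ℝ) else 0)

/-- Euclidean norm of a vector. -/
def vnorm {n : ℕ} (x : Fin n → ℝ) : ℝ := Real.sqrt (∑ i, (x i) ^ 2)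

/-- `lam` is the smallest eigenvalue of `L` restricted to `F = {x : ⟨x,1⟩ = 0}`, i.e. the
minimum of the Rayleigh quotient over nonzero vectors of `F`. -/
def IsLam1 {n : ℕ} (L : Matrix (Fin n) (Fin n) ℝ) (lam : ℝ) : Prop :=
  IsLeast {r | ∃ x : Fin n → ℝ, x ≠ 0 ∧ (∑ i, x i) = 0 ∧
    r = (x ⬝ᵥ L.mulVec x) / (∑ i, (x i) ^ 2)} lam

/-- `lam` is the largest eigenvalue of `L`: the maximum of the Rayleigh quotient. -/
def IsLamN {n : ℕ} (L : Matrix (Fin n) (Fin n) ℝ) (lam : ℝ) : Prop :=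
  IsGreatest {r | ∃ x : Fin n → ℝ, x ≠ 0 ∧
    r = (x ⬝ᵥ L.mulVec x) / (∑ i, (x i) ^ 2)} lam

/-- `Lp` is the Moore–Penrose pseudoinverse of `L`. -/
def IsMoorePenrose {n : ℕ} (L Lp : Matrix (Fin n) (Fin n) ℝ) : Prop :=
  L * Lp * L = L ∧ Lp * L * Lp = Lp ∧ (L * Lp).IsSymm ∧ (Lp * L).IsSymm

/-- The stability constant `β` of sparse-HFS. -/
def betaHFS (l : ℕ) (γ ε lam1 k : ℝ) : ℝ :=
  1.5 * k * Real.sqrt l / ((l : ℝ) * γ * (1 - ε) * lam1 - 1) ^ 2 +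
  Real.sqrt 2 * k / ((l : ℝ) * γ * (1 - ε) * lam1 - 1)

/-- `π(l,u) = (lu/(l+u-0.5))·(1/(1 - 1/(2·max{l,u})))`. -/
def piLU (l u : ℕ) : ℝ :=
  ((l : ℝ) * u / ((l : ℝ) + u - 0.5)) * (1 / (1 - 1 / (2 * ((max l u : ℕ) : ℝ))))

/-!
Write `X S = R_S(f_S) - R̂_S(f_S)`. Swapping one element of `S` moves `X` by at most
`K = 2β + c²(l+u)/(lu)`: stability controls the common points and `c²` the two swapped ones.
Pairing `(S, i ∉ S, j ∈ S)` with `(S - j + i, i, j)` shows that the average of `X` over all `S`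
is at most `β`.

Reveal the elements of a uniform `S` one at a time. The conditional averages of `X` form a Doob
martingale; coupling a set containing `a` with the set obtained by replacing `a` by `b` shows that
the increment with `j` elements still hidden ranges over an interval of length `K u / (u + j)`.
Hoeffding's lemma at each step and Chernoff's bound give the tail `exp (-2t² / (K² σ))` with
`σ = ∑_{m < l} (u / (u + m))²`, and `(u / x)² ≤ u² / (x - ½) - u² / (x + ½)` telescopes
to `σ ≤ π(l, u)` when `l ≤ u`; passing to complements handles `u < l`.
-/

open Real MeasureTheory ProbabilityTheory

/-- Hoeffding's lemma for the uniform distribution on `F`. -/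
theorem expect_exp_mul_le {ι : Type*} {F : Finset ι} (hF : F.Nonempty) {d : ι → ℝ}
    (hd0 : 𝔼 a ∈ F, d a = 0) {m M : ℝ} (hd : ∀ a ∈ F, d a ∈ Set.Icc m M) (s : ℝ) :
    𝔼 a ∈ F, exp (s * d a) ≤ exp (s ^ 2 * (M - m) ^ 2 / 8) := by
  let _ : MeasurableSpace F := ⊤
  have _ : Nonempty F := hF.to_subtype
  let μ := (PMF.uniformOfFintype F).toMeasure
  have hint (g : ι → ℝ) : ∫ x, g x ∂μ = 𝔼 a ∈ F, g a := by
    rw [PMF.integral_eq_sum, expect_eq_sum_div_card, sum_div, ← sum_coe_sort F]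
    simp [PMF.uniformOfFintype_apply, div_eq_inv_mul]
  have h := (hasSubgaussianMGF_of_mem_Icc_of_integral_eq_zero (μ := μ) (X := fun x : F => d x)
    Measurable.of_discrete.aemeasurable (ae_of_all _ fun x => hd x x.2)
    (by rw [hint d, hd0])).mgf_le s
  rw [mgf, hint (fun a => exp (s * d a))] at h
  convert h using 2
  simp only [NNReal.coe_pow, NNReal.coe_div, coe_nnnorm, Real.norm_eq_abs, NNReal.coe_ofNat,
    div_pow, sq_abs]
  ring

section Swap

variable {α : Type*} [DecidableEq α] {S : Finset α} {a b : α}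

lemma card_insert_erase_swap (ha : a ∈ S) (hb : b ∉ S) : #(insert b (S.erase a)) = #S := by
  rw [card_insert_of_notMem (by grind), card_erase_add_one ha]

lemma insert_erase_insert_erase_swap (ha : a ∈ S) (hb : b ∉ S) :
    insert a ((insert b (S.erase a)).erase b) = S := by
  grind

lemma sdiff_insert_erase_swap (ha : a ∈ S) (hb : b ∉ S) : S \ insert b (S.erase a) = {a} := by
  ext x
  simp only [mem_sdiff, mem_insert, mem_erase, mem_singleton]
  grind

lemma insert_erase_swap_sdiff (hb : b ∉ S) : insert b (S.erase a) \ S = {b} := by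
  ext x
  simp only [mem_sdiff, mem_insert, mem_erase, mem_singleton]
  grind

end Swap

lemma abs_sum_sub_sum_le_of_erase_eq {α : Type*} [DecidableEq α] {s t : Finset α} {a b : α}
    (ha : a ∈ s) (hb : b ∈ t) (hst : s.erase a = t.erase b) {f g : α → ℝ} {c β : ℝ}
    (hβ : 0 ≤ β) (hab : |f a - g b| ≤ c) (hfg : ∀ i, |f i - g i| ≤ β) :
    |∑ i ∈ s, f i - ∑ i ∈ t, g i| ≤ c + #s * β := by
  rw [← add_sum_erase s f ha, ← add_sum_erase t g hb, ← hst]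
  calc |f a + ∑ i ∈ s.erase a, f i - (g b + ∑ i ∈ s.erase a, g i)|
      = |(f a - g b) + ∑ i ∈ s.erase a, (f i - g i)| := by rw [sum_sub_distrib]; ring_nf
    _ ≤ c + #(s.erase a) * β := by
        refine (abs_add_le _ _).trans (add_le_add hab ?_)
        refine (abs_sum_le_sum_abs _ _).trans ?_
        simpa using sum_le_sum fun i (_ : i ∈ s.erase a) => hfg i
    _ ≤ c + #s * β := by
        gcongr
        exact erase_subset a s

section Supersets

variable {α : Type*} [Fintype α] [DecidableEq α] {l : ℕ}

def supersetsOfCard (l : ℕ) (A : Finset α) : Finset (Finset α) :=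
  (univ.powersetCard l).filter (A ⊆ ·)

@[simp] lemma mem_supersetsOfCard {A S : Finset α} :
    S ∈ supersetsOfCard l A ↔ #S = l ∧ A ⊆ S := by
  simp [supersetsOfCard]

lemma supersetsOfCard_empty : supersetsOfCard l (∅ : Finset α) = univ.powersetCard l := by
  ext; simp

lemma supersetsOfCard_of_card_eq {A : Finset α} (hA : #A = l) : supersetsOfCard l A = {A} := by
  ext S
  simp only [mem_supersetsOfCard, mem_singleton]
  refine ⟨fun ⟨hS, hAS⟩ => (eq_of_subset_of_card_le hAS (by omega)).symm, ?_⟩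
  rintro rfl
  exact ⟨hA, subset_rfl⟩

lemma card_supersetsOfCard {A : Finset α} (hA : #A ≤ l) :
    #(supersetsOfCard l A) = (Fintype.card α - #A).choose (l - #A) := by
  rw [supersetsOfCard, card_filter_powersetCard_subset _ _ _ (subset_univ A) hA, card_univ]

lemma sum_sum_supersetsOfCard_insert {M : Type*} [AddCommMonoid M] (A : Finset α)
    (φ : Finset α → M) :
    ∑ a ∈ Aᶜ, ∑ S ∈ supersetsOfCard l (insert a A), φ S =
      (l - #A) • ∑ S ∈ supersetsOfCard l A, φ S := by
  rw [sum_comm' (t' := supersetsOfCard l A) (s' := fun S => S \ A), smul_sum]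
  · refine sum_congr rfl fun S hS => ?_
    rw [mem_supersetsOfCard] at hS
    rw [sum_const, card_sdiff_of_subset hS.2, hS.1]
  · intro a S
    simp only [mem_compl, mem_supersetsOfCard, insert_subset_iff, mem_sdiff]
    tauto

lemma expect_supersetsOfCard_eq_expect_insert {A : Finset α} (hA : #A < l)
    (φ : Finset α → ℝ) :
    𝔼 S ∈ supersetsOfCard l A, φ S =
      𝔼 a ∈ Aᶜ, 𝔼 S ∈ supersetsOfCard l (insert a A), φ S := by
  set c := (Fintype.card α - #A - 1).choose (l - #A - 1)
  have hc : ∀ a ∈ Aᶜ, #(supersetsOfCard l (insert a A)) = c := by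
    intro a ha
    have hcard := card_insert_of_notMem (mem_compl.1 ha)
    rw [card_supersetsOfCard (by omega), hcard]
    congr 1
  have hcount : (#Aᶜ : ℝ) * c = (l - #A : ℕ) * #(supersetsOfCard l A) := by
    have h := sum_sum_supersetsOfCard_insert (l := l) A (fun _ => (1 : ℝ))
    simp only [sum_const, nsmul_eq_mul, mul_one] at h
    rwa [sum_congr rfl fun a ha => congrArg (Nat.cast (R := ℝ)) (hc a ha), sum_const,
      nsmul_eq_mul] at h
  have hsum := sum_sum_supersetsOfCard_insert (l := l) A φ
  have hlA : ((l - #A : ℕ) : ℝ) ≠ 0 := by exact_mod_cast (Nat.sub_pos_of_lt hA).ne'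
  have hinner : ∀ a ∈ Aᶜ, 𝔼 S ∈ supersetsOfCard l (insert a A), φ S =
      (∑ S ∈ supersetsOfCard l (insert a A), φ S) / c := fun a ha => by
    rw [expect_eq_sum_div_card, hc a ha]
  rw [expect_eq_sum_div_card, expect_eq_sum_div_card Aᶜ, sum_congr rfl hinner, ← sum_div,
    hsum, div_div, mul_comm, hcount, nsmul_eq_mul, mul_div_mul_left _ _ hlA]

lemma insert_erase_mem_supersetsOfCard_insert {A S : Finset α} {a b : α} (ha : a ∉ A)
    (hS : S ∈ (supersetsOfCard l (insert a A)).filter (b ∉ ·)) :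
    insert b (S.erase a) ∈ (supersetsOfCard l (insert b A)).filter (a ∉ ·) := by
  simp only [mem_filter, mem_supersetsOfCard, insert_subset_iff] at hS ⊢
  refine ⟨⟨?_, by grind, by grind⟩, by grind⟩
  rw [card_insert_erase_swap hS.1.2.1 hS.2, hS.1.1]

lemma sum_supersetsOfCard_insert_sub_sum_insert (X : Finset α → ℝ) {A : Finset α} {a b : α}
    (ha : a ∉ A) (hb : b ∉ A) :
    ∑ S ∈ supersetsOfCard l (insert a A), X S - ∑ S ∈ supersetsOfCard l (insert b A), X S =
      ∑ S ∈ (supersetsOfCard l (insert a A)).filter (b ∉ ·),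
        (X S - X (insert b (S.erase a))) := by
  have hboth : (supersetsOfCard l (insert a A)).filter (b ∈ ·) =
      (supersetsOfCard l (insert b A)).filter (a ∈ ·) := by
    ext S
    simp only [mem_filter, mem_supersetsOfCard, insert_subset_iff]
    tauto
  have hswap : ∑ S ∈ (supersetsOfCard l (insert b A)).filter (a ∉ ·), X S =
      ∑ S ∈ (supersetsOfCard l (insert a A)).filter (b ∉ ·), X (insert b (S.erase a)) := by
    refine sum_nbij' (fun T => insert a (T.erase b)) (fun S => insert b (S.erase a))
      (fun T hT => insert_erase_mem_supersetsOfCard_insert hb hT)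
      (fun S hS => insert_erase_mem_supersetsOfCard_insert ha hS) (fun T hT => ?_)
      (fun S hS => ?_) (fun T hT => ?_)
    · simp only [mem_filter, mem_supersetsOfCard, insert_subset_iff] at hT
      exact insert_erase_insert_erase_swap hT.1.2.1 hT.2
    · simp only [mem_filter, mem_supersetsOfCard, insert_subset_iff] at hS
      exact insert_erase_insert_erase_swap hS.1.2.1 hS.2
    · simp only [mem_filter, mem_supersetsOfCard, insert_subset_iff] at hT
      rw [insert_erase_insert_erase_swap hT.1.2.1 hT.2]
  rw [← sum_filter_add_sum_filter_not (supersetsOfCard l (insert a A)) (b ∈ ·),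
    ← sum_filter_add_sum_filter_not (supersetsOfCard l (insert b A)) (a ∈ ·), hboth, hswap,
    sum_sub_distrib]
  ring

/-- Coupling `S ∋ a` with `insert b (S.erase a)`, only the sets avoiding `b` contribute, and they
form a fraction `u / (u + j)` of all sets containing `insert a A`. -/
lemma abs_expect_supersetsOfCard_insert_sub_le {u j : ℕ} (hlu : l + u = Fintype.card α)
    {X : Finset α → ℝ} {B : ℝ}
    (hX : ∀ S, #S = l → ∀ a ∈ S, ∀ b ∉ S, |X S - X (insert b (S.erase a))| ≤ B)
    {A : Finset α} (hA : #A + j + 1 = l) {a b : α} (ha : a ∉ A) (hb : b ∉ A) (hab : a ≠ b) :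
    |𝔼 S ∈ supersetsOfCard l (insert a A), X S -
        𝔼 S ∈ supersetsOfCard l (insert b A), X S| ≤ B * u / (u + j) := by
  have hcard_ins : ∀ c ∉ A, #(supersetsOfCard l (insert c A)) = (u + j).choose j := by
    intro c hc
    have hins := card_insert_of_notMem hc
    rw [card_supersetsOfCard (by omega), hins, ← hlu]
    congr 1 <;> omega
  have huj : 1 ≤ u + j := by
    have := card_le_univ (insert a (insert b A))
    rw [card_insert_of_notMem (by simp [hab, ha]), card_insert_of_notMem hb] at this
    omega
  have hfilter : (supersetsOfCard l (insert a A)).filter (b ∉ ·) =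
      ((univ.erase b).powersetCard l).filter (insert a A ⊆ ·) := by
    ext S
    simp only [mem_filter, mem_supersetsOfCard, mem_powersetCard, subset_erase,
      insert_subset_iff]
    grind
  have hcard_filter :
      #((supersetsOfCard l (insert a A)).filter (b ∉ ·)) = (u + j - 1).choose j := by
    have hins := card_insert_of_notMem ha
    rw [hfilter, card_filter_powersetCard_subset _ _ _ (by simp [subset_erase, hab.symm, hb])
      (by omega), card_erase_of_mem (mem_univ b), card_univ, hins, ← hlu]
    congr 1 <;> omega
  have hid : ((u + j - 1).choose j : ℝ) * (u + j) = (u + j).choose j * u := by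
    have := Nat.choose_mul_succ_eq (u + j - 1) j
    rw [Nat.sub_add_cancel huj, Nat.add_sub_cancel] at this
    exact_mod_cast this
  have hpos : (0 : ℝ) < (u + j).choose j := by exact_mod_cast Nat.choose_pos (by omega)
  calc |𝔼 S ∈ supersetsOfCard l (insert a A), X S -
        𝔼 S ∈ supersetsOfCard l (insert b A), X S|
      = |∑ S ∈ (supersetsOfCard l (insert a A)).filter (b ∉ ·),
          (X S - X (insert b (S.erase a)))| / (u + j).choose j := by
        rw [expect_eq_sum_div_card, expect_eq_sum_div_card, hcard_ins a ha, hcard_ins b hb,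
          ← sub_div, sum_supersetsOfCard_insert_sub_sum_insert X ha hb, abs_div, abs_of_pos hpos]
    _ ≤ (u + j - 1).choose j * B / (u + j).choose j := by
        gcongr
        refine (abs_sum_le_sum_abs _ _).trans ?_
        rw [← hcard_filter, ← nsmul_eq_mul]
        refine sum_le_card_nsmul _ _ _ fun S hS => ?_
        simp only [mem_filter, mem_supersetsOfCard, insert_subset_iff] at hS
        exact hX S hS.1.1 a hS.1.2.1 b hS.2
    _ = B * u / (u + j) := by
        have : (u : ℝ) + j ≠ 0 := by exact_mod_cast (by omega : u + j ≠ 0)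
        field_simp
        linear_combination B * hid

/-- `A ↦ 𝔼 T ∈ supersetsOfCard l A, X T` is the Doob martingale of `X` as the elements of a
uniform random `l`-set are revealed. -/
theorem expect_exp_sub_expect_supersetsOfCard_le {u : ℕ} (hlu : l + u = Fintype.card α)
    {X : Finset α → ℝ} {B : ℝ} (hB : 0 ≤ B)
    (hX : ∀ S, #S = l → ∀ a ∈ S, ∀ b ∉ S, |X S - X (insert b (S.erase a))| ≤ B)
    (s : ℝ) {j : ℕ} {A : Finset α} (hA : #A + j = l) :
    𝔼 S ∈ supersetsOfCard l A, exp (s * (X S - 𝔼 T ∈ supersetsOfCard l A, X T)) ≤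
      exp (s ^ 2 * (∑ m ∈ range j, (B * u / (u + m)) ^ 2) / 8) := by
  induction j generalizing A with
  | zero => simp [supersetsOfCard_of_card_eq (l := l) (by omega : #A = l)]
  | succ j ih =>
    set μ := 𝔼 T ∈ supersetsOfCard l A, X T
    set d : α → ℝ := fun a => 𝔼 T ∈ supersetsOfCard l (insert a A), X T - μ
    set c := B * u / (u + j) with hc
    have hne : Aᶜ.Nonempty := by
      rw [← card_pos, card_compl]
      omega
    have hd0 : 𝔼 a ∈ Aᶜ, d a = 0 := by
      rw [expect_sub_distrib, ← expect_supersetsOfCard_eq_expect_insert (by omega),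
        expect_const hne, sub_self]
    obtain ⟨a₀, ha₀, hmin⟩ := exists_min_image Aᶜ d hne
    have hd : ∀ a ∈ Aᶜ, d a ∈ Set.Icc (d a₀) (d a₀ + c) := by
      intro a ha
      refine ⟨hmin a ha, ?_⟩
      rcases eq_or_ne a a₀ with rfl | hne
      · simp only [le_add_iff_nonneg_right, c]
        positivity
      · have := abs_expect_supersetsOfCard_insert_sub_le hlu hX (by omega)
          (mem_compl.1 ha) (mem_compl.1 ha₀) hne
        have := (abs_le.1 this).2
        simp only [d]
        linarith
    have hIH : ∀ a ∈ Aᶜ, 𝔼 S ∈ supersetsOfCard l (insert a A),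
        exp (s * (X S - 𝔼 T ∈ supersetsOfCard l (insert a A), X T)) ≤
          exp (s ^ 2 * (∑ m ∈ range j, (B * u / (u + m)) ^ 2) / 8) := fun a ha =>
      ih (by rw [card_insert_of_notMem (mem_compl.1 ha)]; omega)
    calc 𝔼 S ∈ supersetsOfCard l A, exp (s * (X S - μ))
        = 𝔼 a ∈ Aᶜ, exp (s * d a) * 𝔼 S ∈ supersetsOfCard l (insert a A),
            exp (s * (X S - 𝔼 T ∈ supersetsOfCard l (insert a A), X T)) := by
          rw [expect_supersetsOfCard_eq_expect_insert (by omega)]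
          refine expect_congr rfl fun a _ => ?_
          rw [mul_expect]
          refine expect_congr rfl fun S _ => ?_
          rw [← exp_add]
          congr 1
          ring
      _ ≤ 𝔼 a ∈ Aᶜ, exp (s * d a) *
            exp (s ^ 2 * (∑ m ∈ range j, (B * u / (u + m)) ^ 2) / 8) :=
          expect_le_expect fun a ha => mul_le_mul_of_nonneg_left (hIH a ha) (exp_pos _).le
      _ ≤ exp (s ^ 2 * c ^ 2 / 8) *
            exp (s ^ 2 * (∑ m ∈ range j, (B * u / (u + m)) ^ 2) / 8) := by
          rw [← expect_mul]
          gcongr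
          simpa using expect_exp_mul_le hne hd0 hd s
      _ = exp (s ^ 2 * (∑ m ∈ range (j + 1), (B * u / (u + m)) ^ 2) / 8) := by
          rw [← exp_add, sum_range_succ, hc]
          ring_nf

theorem card_filter_le_mul_exp {u : ℕ} (hlu : l + u = Fintype.card α)
    {X : Finset α → ℝ} {B : ℝ} (hB : 0 ≤ B)
    (hX : ∀ S, #S = l → ∀ a ∈ S, ∀ b ∉ S, |X S - X (insert b (S.erase a))| ≤ B)
    {t V : ℝ} (ht : 0 ≤ t) (hV : 0 < V) (hσ : ∑ m ∈ range l, (B * u / (u + m)) ^ 2 ≤ V) :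
    (#((univ.powersetCard l).filter fun S => 𝔼 T ∈ univ.powersetCard l, X T + t ≤ X S) :
      ℝ) ≤
      #((univ : Finset α).powersetCard l) * exp (-2 * t ^ 2 / V) := by
  set P := (univ : Finset α).powersetCard l
  set μ := 𝔼 T ∈ P, X T
  set s := 4 * t / V
  have hs : 0 ≤ s := by positivity
  have hmgf : ∑ S ∈ P, exp (s * (X S - μ)) ≤ #P * exp (s ^ 2 * V / 8) := by
    have h := expect_exp_sub_expect_supersetsOfCard_le hlu hB hX s (A := ∅) (j := l) (by simp)
    rw [supersetsOfCard_empty] at h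
    rw [← card_smul_expect, nsmul_eq_mul]
    gcongr
    exact h.trans (exp_le_exp.2 (by gcongr))
  have hmarkov : #(P.filter (fun S => μ + t ≤ X S)) * exp (s * t) ≤
      ∑ S ∈ P, exp (s * (X S - μ)) := by
    rw [← nsmul_eq_mul]
    refine (card_nsmul_le_sum _ _ _ fun S hS => ?_).trans
      (sum_le_sum_of_subset_of_nonneg (filter_subset _ _) fun _ _ _ => (exp_pos _).le)
    have := (mem_filter.1 hS).2
    gcongr
    linarith
  have hexp : exp (s ^ 2 * V / 8) = exp (-2 * t ^ 2 / V) * exp (s * t) := by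
    rw [← exp_add]
    congr 1
    simp only [s]
    field_simp
    ring
  rw [hexp, ← mul_assoc] at hmgf
  exact le_of_mul_le_mul_right (hmarkov.trans hmgf) (exp_pos _)

lemma compl_mem_powersetCard_univ {u : ℕ} (hlu : l + u = Fintype.card α) {S : Finset α} :
    Sᶜ ∈ univ.powersetCard u ↔ S ∈ univ.powersetCard l := by
  have := card_le_univ S
  simp only [mem_powersetCard_univ, card_compl]
  omega

lemma card_filter_powersetCard_univ_compl {u : ℕ} (hlu : l + u = Fintype.card α)
    (p : Finset α → Prop) [DecidablePred p] :
    #((univ.powersetCard u).filter (fun T => p Tᶜ)) = #((univ.powersetCard l).filter p) := by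
  refine card_nbij' compl compl (fun T hT => ?_) (fun S hS => ?_) (fun T _ => compl_compl T)
    (fun S _ => compl_compl S)
  · rw [mem_coe, mem_filter] at hT ⊢
    exact ⟨(compl_mem_powersetCard_univ hlu).1 (by rw [compl_compl]; exact hT.1), hT.2⟩
  · rw [mem_coe, mem_filter] at hS ⊢
    exact ⟨(compl_mem_powersetCard_univ hlu).2 hS.1, by rw [compl_compl]; exact hS.2⟩

lemma compl_insert_erase {S : Finset α} {a b : α} (hab : a ≠ b) :
    (insert b (S.erase a))ᶜ = insert a (Sᶜ.erase b) := by
  rw [compl_insert, compl_erase, erase_insert_of_ne hab]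

end Supersets

theorem sum_range_div_add_sq_le {u : ℝ} (hu : 1 / 2 < u) (l : ℕ) :
    ∑ m ∈ range l, (u / (u + m)) ^ 2 ≤ l * u / (l + u - 0.5) * (1 / (1 - 1 / (2 * u))) := by
  set f : ℕ → ℝ := fun m => u ^ 2 / (u + m - 1 / 2)
  have hterm (m : ℕ) : (u / (u + m)) ^ 2 ≤ f m - f (m + 1) := by
    have hm : (0 : ℝ) ≤ m := m.cast_nonneg
    simp only [f, Nat.cast_succ]
    rw [div_sub_div _ _ (by linarith) (by linarith), div_pow,
      div_le_div_iff₀ (by positivity) (by nlinarith)]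
    nlinarith [sq_nonneg u]
  have hl : (0 : ℝ) ≤ l := l.cast_nonneg
  calc ∑ m ∈ range l, (u / (u + m)) ^ 2 ≤ ∑ m ∈ range l, (f m - f (m + 1)) :=
        sum_le_sum fun m _ => hterm m
    _ = f 0 - f l := sum_range_sub' f l
    _ = l * u / (l + u - 0.5) * (1 / (1 - 1 / (2 * u))) := by
      have h1 : u - 1 / 2 ≠ 0 := by linarith
      have h2 : u + l - 1 / 2 ≠ 0 := by linarith
      have h3 : (l : ℝ) + u - 0.5 ≠ 0 := by norm_num; linarith
      have h4 : 2 * u - 1 ≠ 0 := by linarith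
      simp only [f, Nat.cast_zero, add_zero]
      rw [one_sub_div (by linarith), one_div_div, div_sub_div _ _ h1 h2, div_mul_div_comm,
        div_eq_div_iff (mul_ne_zero h1 h2) (mul_ne_zero h3 h4)]
      ring

lemma piLU_comm (l u : ℕ) : piLU l u = piLU u l := by
  rw [piLU, piLU, max_comm]
  ring

lemma piLU_pos {l u : ℕ} (hl : 1 ≤ l) (hu : 1 ≤ u) : 0 < piLU l u := by
  have hl' : (1 : ℝ) ≤ l := by exact_mod_cast hl
  have hu' : (1 : ℝ) ≤ u := by exact_mod_cast hu
  have hmax : (1 : ℝ) ≤ ((max l u : ℕ) : ℝ) := by exact_mod_cast hl.trans (le_max_left l u)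
  have : 1 / (2 * ((max l u : ℕ) : ℝ)) < 1 := by
    rw [div_lt_one (by positivity)]
    linarith
  unfold piLU
  apply mul_pos
  · apply div_pos (by positivity)
    norm_num
    linarith
  · exact div_pos one_pos (by linarith)

lemma sum_range_div_add_sq_le_piLU {l u : ℕ} (hu : 1 ≤ u) (hlu : l ≤ u) :
    ∑ m ∈ range l, ((u : ℝ) / (u + m)) ^ 2 ≤ piLU l u := by
  have hu' : (1 : ℝ) ≤ u := by exact_mod_cast hu
  rw [piLU, max_eq_right hlu]
  exact sum_range_div_add_sq_le (by linarith) l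

theorem card_filter_le_mul_exp_piLU {α : Type*} [Fintype α] [DecidableEq α] {l u : ℕ}
    (hlu : l + u = Fintype.card α) (hl : 1 ≤ l) (hu : 1 ≤ u) {X : Finset α → ℝ} {B : ℝ}
    (hB : 0 < B)
    (hX : ∀ S, #S = l → ∀ a ∈ S, ∀ b ∉ S, |X S - X (insert b (S.erase a))| ≤ B)
    {t : ℝ} (ht : 0 ≤ t) :
    (#((univ.powersetCard l).filter fun S => 𝔼 T ∈ univ.powersetCard l, X T + t ≤ X S) :
      ℝ) ≤
      #((univ : Finset α).powersetCard l) * exp (-2 * t ^ 2 / (B ^ 2 * piLU l u)) := by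
  wlog hle : l ≤ u generalizing l u X
  -- complements exchange the roles of `l` and `u`, and `piLU` is symmetric
  · have hY : ∀ T : Finset α, #T = u → ∀ a ∈ T, ∀ b ∉ T,
        |X Tᶜ - X (insert b (T.erase a))ᶜ| ≤ B := by
      intro T hT a ha b hb
      rw [compl_insert_erase (by rintro rfl; exact hb ha)]
      exact hX _ (by rw [card_compl]; omega) b (by simpa) a (by simpa)
    have key := this (X := fun T => X Tᶜ) (by omega) hu hl hY (by omega)
    have hmem : ∀ S : Finset α, Sᶜ ∈ univ.powersetCard u ↔ S ∈ univ.powersetCard l :=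
      fun S => compl_mem_powersetCard_univ hlu
    have hmem' : ∀ T : Finset α, Tᶜ ∈ univ.powersetCard l ↔ T ∈ univ.powersetCard u :=
      fun T => compl_mem_powersetCard_univ (by omega)
    have hμ : 𝔼 T ∈ univ.powersetCard u, X Tᶜ = 𝔼 S ∈ univ.powersetCard l, X S :=
      expect_nbij' compl compl (fun T hT => (hmem' T).2 hT) (fun S hS => (hmem S).2 hS)
        (fun T _ => compl_compl T) (fun S _ => compl_compl S) fun _ _ => rfl
    have hcard :
        #((univ : Finset α).powersetCard u) = #((univ : Finset α).powersetCard l) := by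
      simpa using card_filter_powersetCard_univ_compl hlu (fun _ => True)
    rwa [hμ, hcard, piLU_comm, card_filter_powersetCard_univ_compl hlu
      (fun S => 𝔼 T ∈ univ.powersetCard l, X T + t ≤ X S)] at key
  refine card_filter_le_mul_exp hlu hB.le hX ht (mul_pos (pow_pos hB 2) (piLU_pos hl hu)) ?_
  simp only [mul_div_assoc, mul_pow, ← mul_sum]
  exact mul_le_mul_of_nonneg_left (sum_range_div_add_sq_le_piLU hu hle) (sq_nonneg B)

lemma exp_neg_two_mul_sq_div_eq {K σ δ : ℝ} (hK : K ≠ 0) (hσ : 0 < σ) (hδ : 0 < δ)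
    (hδ1 : δ ≤ 1) :
    exp (-2 * (K * √(σ * log (1 / δ) / 2)) ^ 2 / (K ^ 2 * σ)) = δ := by
  have hlog : 0 ≤ log (1 / δ) := log_nonneg (by rw [le_div_iff₀ hδ]; linarith)
  rw [mul_pow, sq_sqrt (by positivity), log_div one_ne_zero hδ.ne', log_one]
  field_simp
  simp [exp_log hδ]

section Risk

variable {α : Type*} [Fintype α] [DecidableEq α] {l : ℕ}

lemma exists_card_eq_mem_notMem {u : ℕ} (hlu : l + u = Fintype.card α) (hl : 1 ≤ l)
    (hu : 1 ≤ u) : ∃ S : Finset α, #S = l ∧ ∃ a ∈ S, ∃ b, b ∉ S := by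
  obtain ⟨S, -, hS⟩ := exists_subset_card_eq (show l ≤ #(univ : Finset α) by
    rw [card_univ]; omega)
  obtain ⟨a, ha⟩ := card_pos.1 (show 0 < #S by omega)
  obtain ⟨b, hb⟩ := card_pos.1 (show 0 < #Sᶜ by rw [card_compl]; omega)
  exact ⟨S, hS, a, ha, b, mem_compl.1 hb⟩

lemma sum_sum_sum_insert_erase {M : Type*} [AddCommMonoid M] (g : Finset α → α → α → M) :
    ∑ S ∈ univ.powersetCard l, ∑ i ∈ Sᶜ, ∑ j ∈ S, g (insert i (S.erase j)) i j =
      ∑ T ∈ univ.powersetCard l, ∑ i ∈ T, ∑ j ∈ Tᶜ, g T i j := by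
  simp only [← sum_product', sum_sigma']
  refine sum_nbij' (fun x => ⟨insert x.2.1 (x.1.erase x.2.2), x.2⟩)
    (fun x => ⟨insert x.2.2 (x.1.erase x.2.1), x.2⟩) ?_ ?_ ?_ ?_ fun _ _ => rfl
  all_goals
    rintro ⟨S, i, j⟩ h
    simp only [mem_sigma, mem_product, mem_compl, mem_powersetCard_univ] at h ⊢
  · exact ⟨by rw [card_insert_erase_swap h.2.2 h.2.1, h.1], by grind, by grind⟩
  · exact ⟨by rw [card_insert_erase_swap h.2.1 h.2.2, h.1], by grind, by grind⟩
  · rw [insert_erase_insert_erase_swap h.2.2 h.2.1]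
  · rw [insert_erase_insert_erase_swap h.2.1 h.2.2]

/-- `R_S - R̂_S`, where `L S i` is the loss at `i` of the hypothesis learned from `S`. -/
def riskGap (l u : ℕ) (L : Finset α → α → ℝ) (S : Finset α) : ℝ :=
  (1 / (u : ℝ)) * ∑ i ∈ Sᶜ, L S i - (1 / (l : ℝ)) * ∑ i ∈ S, L S i

variable {u : ℕ} {L : Finset α → α → ℝ} {β : ℝ}

lemma abs_riskGap_sub_le (hlu : l + u = Fintype.card α) {C : ℝ}
    (hC : ∀ S, #S = l → ∀ i, L S i ∈ Set.Icc 0 C)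
    (hL : ∀ S, #S = l → ∀ a ∈ S, ∀ b ∉ S, ∀ i,
      |L S i - L (insert b (S.erase a)) i| ≤ β)
    (hβ : 0 ≤ β) {S : Finset α} (hS : #S = l) {a b : α} (ha : a ∈ S) (hb : b ∉ S) :
    |riskGap l u L S - riskGap l u L (insert b (S.erase a))| ≤ 2 * β + C / l + C / u := by
  set T := insert b (S.erase a)
  have hT : #T = l := by rw [card_insert_erase_swap ha hb, hS]
  have hab (x y : α) : |L S x - L T y| ≤ C := by
    obtain ⟨h1, h2⟩ := hC S hS x
    obtain ⟨h3, h4⟩ := hC T hT y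
    rw [abs_le]
    constructor <;> linarith
  have hl : (0 : ℝ) < l := by exact_mod_cast hS ▸ card_pos.2 ⟨a, ha⟩
  have hu : (0 : ℝ) < u := by
    have := card_le_univ (insert b S)
    rw [card_insert_of_notMem hb] at this
    exact_mod_cast (by omega : 0 < u)
  have hin := abs_sum_sub_sum_le_of_erase_eq ha (mem_insert_self b _)
    (erase_insert (by grind : b ∉ S.erase a)).symm hβ (hab a b) (hL S hS a ha b hb)
  have hout := abs_sum_sub_sum_le_of_erase_eq (mem_compl.2 hb) (t := Tᶜ) (b := a)
    (by simp [T, compl_insert_erase (show a ≠ b by rintro rfl; exact hb ha)])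
    (by rw [compl_insert_erase (show a ≠ b by rintro rfl; exact hb ha),
      erase_insert (by simp [ha])])
    hβ (hab b a) (hL S hS a ha b hb)
  rw [card_compl, hS, ← hlu, add_tsub_cancel_left] at hout
  rw [hS] at hin
  have hgap : riskGap l u L S - riskGap l u L T =
      (1 / (u : ℝ)) * (∑ i ∈ Sᶜ, L S i - ∑ i ∈ Tᶜ, L T i) -
        (1 / (l : ℝ)) * (∑ i ∈ S, L S i - ∑ i ∈ T, L T i) := by
    simp only [riskGap]
    ring
  rw [hgap]
  calc _ ≤ |(1 / (u : ℝ)) * (∑ i ∈ Sᶜ, L S i - ∑ i ∈ Tᶜ, L T i)| +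
        |(1 / (l : ℝ)) * (∑ i ∈ S, L S i - ∑ i ∈ T, L T i)| := abs_sub _ _
    _ ≤ (1 / (u : ℝ)) * (C + u * β) + (1 / (l : ℝ)) * (C + l * β) := by
        rw [abs_mul, abs_mul, abs_of_pos (one_div_pos.2 hu), abs_of_pos (one_div_pos.2 hl)]
        gcongr
    _ = 2 * β + C / l + C / u := by
        field_simp
        ring

lemma expect_riskGap_le (hlu : l + u = Fintype.card α) (hl : 1 ≤ l) (hu : 1 ≤ u)
    (hL : ∀ S, #S = l → ∀ a ∈ S, ∀ b ∉ S, ∀ i,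
      |L S i - L (insert b (S.erase a)) i| ≤ β) :
    𝔼 S ∈ univ.powersetCard l, riskGap l u L S ≤ β := by
  set P := (univ : Finset α).powersetCard l
  have hcard : ∀ S ∈ P, #S = l ∧ #Sᶜ = u := fun S hS => by
    rw [mem_powersetCard_univ] at hS
    rw [card_compl, hS]
    omega
  have hD : ∑ S ∈ P, ∑ i ∈ Sᶜ, ∑ j ∈ S, (L S i - L (insert i (S.erase j)) i) =
      l * ∑ S ∈ P, ∑ i ∈ Sᶜ, L S i - u * ∑ S ∈ P, ∑ i ∈ S, L S i := by
    have hswap := sum_sum_sum_insert_erase (l := l) fun T i (_ : α) => L T i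
    simp only [sum_sub_distrib]
    rw [hswap, mul_sum, mul_sum]
    congr 1 <;> refine sum_congr rfl fun S hS => ?_ <;>
      simp [(hcard S hS).1, (hcard S hS).2, mul_sum]
  have hDle : ∑ S ∈ P, ∑ i ∈ Sᶜ, ∑ j ∈ S, (L S i - L (insert i (S.erase j)) i) ≤
      ∑ S ∈ P, ∑ i ∈ Sᶜ, ∑ j ∈ S, β :=
    sum_le_sum fun S hS => sum_le_sum fun i hi => sum_le_sum fun j hj =>
      (le_abs_self _).trans (hL S (hcard S hS).1 j hj i (mem_compl.1 hi) i)
  have hβsum : ∑ S ∈ P, ∑ i ∈ Sᶜ, ∑ j ∈ S, β = #P * (u * l * β) := by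
    rw [← nsmul_eq_mul, ← sum_const]
    refine sum_congr rfl fun S hS => ?_
    simp [(hcard S hS).1, (hcard S hS).2]
    ring
  have hl' : (0 : ℝ) < l := by exact_mod_cast hl
  have hu' : (0 : ℝ) < u := by exact_mod_cast hu
  have hP : (0 : ℝ) < #P := by
    exact_mod_cast card_pos.2 (powersetCard_nonempty.2 (by rw [card_univ]; omega))
  have hgap : ∑ S ∈ P, riskGap l u L S =
      (l * ∑ S ∈ P, ∑ i ∈ Sᶜ, L S i - u * ∑ S ∈ P, ∑ i ∈ S, L S i) / (l * u) := by
    simp only [riskGap, sum_sub_distrib, ← mul_sum]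
    field_simp
  rw [expect_eq_sum_div_card, div_le_iff₀ hP, hgap, div_le_iff₀ (by positivity)]
  linarith

lemma card_filter_riskGap_tail_le (hlu : l + u = Fintype.card α) (hl : 1 ≤ l) (hu : 1 ≤ u)
    {C : ℝ} (hC : ∀ S, #S = l → ∀ i, L S i ∈ Set.Icc 0 C)
    (hL : ∀ S, #S = l → ∀ a ∈ S, ∀ b ∉ S, ∀ i,
      |L S i - L (insert b (S.erase a)) i| ≤ β)
    (hβ : 0 ≤ β) (hK : 0 < 2 * β + C * (l + u) / (l * u)) {δ : ℝ} (hδ : 0 < δ)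
    (hδ1 : δ ≤ 1) :
    (#((univ.powersetCard l).filter fun S => 𝔼 T ∈ univ.powersetCard l, riskGap l u L T +
        (2 * β + C * (l + u) / (l * u)) * √(piLU l u * log (1 / δ) / 2) ≤ riskGap l u L S) :
      ℝ) ≤ δ * #((univ : Finset α).powersetCard l) := by
  have hl' : (0 : ℝ) < l := by exact_mod_cast hl
  have hu' : (0 : ℝ) < u := by exact_mod_cast hu
  have hK' : 2 * β + C * (l + u) / (l * u) = 2 * β + C / l + C / u := by
    field_simp
    ring
  have h := card_filter_le_mul_exp_piLU hlu hl hu hK (X := riskGap l u L)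
    (fun S hS a ha b hb => hK' ▸ abs_riskGap_sub_le hlu hC hL hβ hS ha hb)
    (t := (2 * β + C * (l + u) / (l * u)) * √(piLU l u * log (1 / δ) / 2))
    (mul_nonneg hK.le (sqrt_nonneg _))
  rw [exp_neg_two_mul_sq_div_eq hK.ne' (piLU_pos hl hu) hδ hδ1] at h
  exact h.trans_eq (mul_comm _ _)

end Risk

lemma one_sub_mul_card_le_card_filter {ι : Type*} {F : Finset ι} {p q : ι → Prop}
    [DecidablePred p] [DecidablePred q] (hpq : ∀ x ∈ F, ¬ p x → q x) {δ : ℝ}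
    (hq : #(F.filter q) ≤ δ * #F) :
    (1 - δ) * #F ≤ #(F.filter p) := by
  have hsplit : (#(F.filter p) : ℝ) + #(F.filter (¬ p ·)) = #F := by
    exact_mod_cast card_filter_add_card_filter_not p
  have hsub : (#(F.filter (¬ p ·)) : ℝ) ≤ #(F.filter q) := by
    exact_mod_cast card_le_card fun x hx => by
      rw [mem_filter] at hx ⊢
      exact ⟨hx.1, hpq x hx.1 hx.2⟩
  linarith

theorem one_sub_mul_card_le_card_filter_risk_le {α : Type*} [Fintype α] [DecidableEq α]
    {l u : ℕ} (hlu : l + u = Fintype.card α) (hl : 1 ≤ l) (hu : 1 ≤ u)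
    {L : Finset α → α → ℝ} {C β : ℝ}
    (hC : ∀ S, #S = l → ∀ i, L S i ∈ Set.Icc 0 C)
    (hL : ∀ S, #S = l → ∀ a ∈ S, ∀ b ∉ S, ∀ i,
      |L S i - L (insert b (S.erase a)) i| ≤ β)
    {δ : ℝ} (hδ : 0 < δ) :
    (1 - δ) * #((univ : Finset α).powersetCard l) ≤
      #((univ.powersetCard l).filter fun S =>
        (1 / (u : ℝ)) * ∑ i ∈ Sᶜ, L S i ≤ (1 / (l : ℝ)) * ∑ i ∈ S, L S i + β +
          (2 * β + C * (l + u) / (l * u)) * √(piLU l u * log (1 / δ) / 2)) := by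
  set K := 2 * β + C * (l + u) / (l * u)
  obtain ⟨S₀, hS₀, a₀, ha₀, b₀, hb₀⟩ := exists_card_eq_mem_notMem hlu hl hu
  have hβ : 0 ≤ β := (abs_nonneg _).trans (hL S₀ hS₀ a₀ ha₀ b₀ hb₀ a₀)
  have hC0 : 0 ≤ C := (hC S₀ hS₀ a₀).1.trans (hC S₀ hS₀ a₀).2
  obtain hδ1 | hδ1 := le_or_gt 1 δ
  · refine one_sub_mul_card_le_card_filter (q := fun _ => True) (fun _ _ _ => trivial) ?_
    simpa using le_mul_of_one_le_left (Nat.cast_nonneg _) hδ1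
  obtain hK0 | hKpos := (show 0 ≤ K by positivity).eq_or_lt
  · have hCK : 0 ≤ C * (l + u) / (l * u) := by positivity
    have hβ0 : β = 0 := by linarith
    have hC0 : C = 0 := by
      have : C * (l + u) / (l * u) = 0 := by linarith
      exact (mul_eq_zero.1 ((div_eq_zero_iff.1 this).resolve_right (by positivity))).resolve_right
        (by positivity)
    refine one_sub_mul_card_le_card_filter (q := fun _ => False) (fun S hS hbad => hbad ?_)
      (by rw [filter_false, card_empty, Nat.cast_zero]; exact mul_nonneg hδ.le (Nat.cast_nonneg _))
    have hL0 (i : α) : L S i = 0 := by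
      simpa [hC0] using hC S (mem_powersetCard_univ.1 hS) i
    simp [hL0, hβ0, ← hK0]
  refine one_sub_mul_card_le_card_filter (fun S _ hS => ?_)
    (card_filter_riskGap_tail_le hlu hl hu hC hL hβ hKpos hδ hδ1.le)
  have := expect_riskGap_le hlu hl hu hL
  simp only [riskGap] at this ⊢
  push Not at hS
  linarith

theorem stmt_1_general {n : ℕ}
    (l u : ℕ) (hl : 1 ≤ l) (hln : l ≤ n - 1) (hu : u = n - l)
    (y : Fin n → ℝ)
    (f : Finset (Fin n) → Fin n → ℝ)
    (β : ℝ)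
    (hstable : ∀ S S' : Finset (Fin n), S.card = l → S'.card = l →
      (S \ S').card = 1 → (S' \ S).card = 1 →
      ∀ i : Fin n, |(f S i - y i) ^ 2 - (f S' i - y i) ^ 2| ≤ β)
    (c : ℝ) (hc : ∀ S : Finset (Fin n), S.card = l → ∀ i, |f S i - y i| ≤ c)
    (δ : ℝ) (hδ : 0 < δ) :
    (1 - δ) * ((Finset.powersetCard l (Finset.univ : Finset (Fin n))).card : ℝ) ≤
      (((Finset.powersetCard l (Finset.univ : Finset (Fin n))).filter (fun S =>
        (1 / (u : ℝ)) * ∑ i ∈ Sᶜ, (f S i - y i) ^ 2 ≤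
          (1 / (l : ℝ)) * ∑ i ∈ S, (f S i - y i) ^ 2 + β +
            (2 * β + c ^ 2 * ((l : ℝ) + (u : ℝ)) / ((l : ℝ) * (u : ℝ))) *
              Real.sqrt (piLU l u * Real.log (1 / δ) / 2))).card : ℝ) := by
  refine one_sub_mul_card_le_card_filter_risk_le (by rw [Fintype.card_fin]; omega) hl (by omega)
    (fun S hS i => ⟨sq_nonneg _, ?_⟩) (fun S hS a ha b hb => hstable S _ hS ?_ ?_ ?_) hδ
  · rw [← sq_abs]
    exact pow_le_pow_left₀ (abs_nonneg _) (hc S hS i) 2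
  · rw [card_insert_erase_swap ha hb, hS]
  · rw [sdiff_insert_erase_swap ha hb, card_singleton]
  · rw [insert_erase_swap_sdiff hb, card_singleton]

/-- generalization bound for uniformly β-stable transductive algorithms:
with probability at least `1 − δ` over a size-`l` labeled set `S` drawn uniformly at
random, `R_S(f_S) ≤ R̂_S(f_S) + β + (2β + c²(l+u)/(lu))·√(π(l,u)·ln(1/δ)/2)`. -/
theorem stmt_1 {n : ℕ} (hn : 2 ≤ n)
    (l u : ℕ) (hl : 1 ≤ l) (hln : l ≤ n - 1) (hu : u = n - l)
    (y : Fin n → ℝ)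
    (f : Finset (Fin n) → Fin n → ℝ)
    (β : ℝ)
    (hstable : ∀ S S' : Finset (Fin n), S.card = l → S'.card = l →
      (S \ S').card = 1 → (S' \ S).card = 1 →
      ∀ i : Fin n, |(f S i - y i) ^ 2 - (f S' i - y i) ^ 2| ≤ β)
    (c : ℝ) (hc : ∀ S : Finset (Fin n), S.card = l → ∀ i, |f S i - y i| ≤ c)
    (δ : ℝ) (hδ : 0 < δ) :
    (1 - δ) * ((Finset.powersetCard l (Finset.univ : Finset (Fin n))).card : ℝ) ≤
      (((Finset.powersetCard l (Finset.univ : Finset (Fin n))).filter (fun S =>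
        (1 / (u : ℝ)) * ∑ i ∈ Sᶜ, (f S i - y i) ^ 2 ≤
          (1 / (l : ℝ)) * ∑ i ∈ S, (f S i - y i) ^ 2 + β +
            (2 * β + c ^ 2 * ((l : ℝ) + (u : ℝ)) / ((l : ℝ) * (u : ℝ))) *
              Real.sqrt (piLU l u * Real.log (1 / δ) / 2))).card : ℝ) :=
  stmt_1_general l u hl hln hu y f β hstable c hc δ hδ
end
end

section
/- Let G be a connected weighted graph on n ≥ 2 vertices with Laplacian L_G, and let H be a weighted graph on the same vertices whose Laplacian L_H makes it a (1±ε)-spectral sparsifier of G with 0 ≤ ε < 1. Let γ > 0, 1 ≤ l ≤ n−1, let y ∈ ℝⁿ satisfy |y_i| ≤ k for all i, and assume lγ(1−ε)λ₁ > 1. If S and S' are two size-l subsets of {1,…,n} differing in exactly one element, then the sparse-HFS hypotheses satisfy ‖f̃_S − f̃_{S'}‖₂ ≤ 1.5·k·√l/(lγ(1−ε)λ₁ − 1)² + √2·k/(lγ(1−ε)λ₁ − 1). -/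
open Matrix BigOperators Finset
open scoped Classical

noncomputable section

/-! Proof idea: on `F` the form `x ↦ xᵀ(lγ L_H + I_S)x` is coercive with constant
`c = lγ(1-ε)λ₁`, because `L_H ≥ (1-ε)L_G ≥ (1-ε)λ₁ I` there. Testing the defining equation
against the solution itself gives `‖f̃_{S'}‖ ≤ √l k / c`. Testing the difference of the two
equations against `Δ = f̃_S - f̃_{S'}` gives
`Δᵀ(lγ L_H + I_S)Δ = Δᵀ(I_S - I_{S'})(y - f̃_{S'})`, where `I_S - I_{S'}` has exactly two
nonzero entries `±1`, so `‖Δ‖ ≤ √2 (k + ‖f̃_{S'}‖) / c`. The stated bound follows from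
`√2 ≤ 1.5` and `c - 1 < c`. -/

section Vnorm

variable {n : ℕ}

lemma vnorm_nonneg (x : Fin n → ℝ) : 0 ≤ vnorm x := Real.sqrt_nonneg _

lemma vnorm_sq (x : Fin n → ℝ) : vnorm x ^ 2 = ∑ i, x i ^ 2 :=
  Real.sq_sqrt (sum_nonneg fun _ _ => sq_nonneg _)

lemma abs_le_vnorm (x : Fin n → ℝ) (i : Fin n) : |x i| ≤ vnorm x := by
  rw [← Real.sqrt_sq_eq_abs]
  exact Real.sqrt_le_sqrt (single_le_sum (f := fun j => x j ^ 2) (fun _ _ => sq_nonneg _)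
    (mem_univ i))

lemma dotProduct_le_vnorm_mul_vnorm (x w : Fin n → ℝ) : x ⬝ᵥ w ≤ vnorm x * vnorm w :=
  Real.sum_mul_le_sqrt_mul_sqrt _ x w

lemma vnorm_le_div_of_mul_vnorm_sq_le {c : ℝ} (hc : 0 < c) {x w : Fin n → ℝ}
    (h : c * vnorm x ^ 2 ≤ x ⬝ᵥ w) : vnorm x ≤ vnorm w / c := by
  rw [le_div_iff₀ hc]
  rcases (vnorm_nonneg x).eq_or_lt with hx | hx
  · rw [← hx, zero_mul]; exact vnorm_nonneg w
  · have := h.trans (dotProduct_le_vnorm_mul_vnorm x w)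
    nlinarith

lemma vnorm_diagonal_mulVec_le (d z : Fin n → ℝ) {m : ℝ} (hm : 0 ≤ m)
    (hz : ∀ i, |z i| ≤ m) : vnorm (diagonal d *ᵥ z) ≤ vnorm d * m := by
  have hsq : ∀ i, (d i * z i) ^ 2 ≤ d i ^ 2 * m ^ 2 := fun i => by
    rw [mul_pow]
    exact mul_le_mul_of_nonneg_left (sq_le_sq' (abs_le.mp (hz i)).1 (abs_le.mp (hz i)).2)
      (sq_nonneg _)
  calc vnorm (diagonal d *ᵥ z) ≤ Real.sqrt (∑ i, d i ^ 2 * m ^ 2) := by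
        simp only [vnorm, mulVec_diagonal]
        exact Real.sqrt_le_sqrt (sum_le_sum fun i _ => hsq i)
    _ = vnorm d * m := by
        rw [← sum_mul, Real.sqrt_mul (sum_nonneg fun _ _ => sq_nonneg _), Real.sqrt_sq hm,
          vnorm]

lemma vnorm_indicator (S : Finset (Fin n)) :
    vnorm (fun i => if i ∈ S then (1 : ℝ) else 0) = Real.sqrt #S := by
  simp [vnorm, ite_pow, sum_ite_mem]

lemma vnorm_indicator_sub_indicator (S S' : Finset (Fin n)) :
    vnorm ((fun i => if i ∈ S then (1 : ℝ) else 0) - fun i => if i ∈ S' then 1 else 0) =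
      Real.sqrt (#(S \ S') + #(S' \ S)) := by
  have hsq : ∀ i, ((((fun i => if i ∈ S then 1 else 0) - fun i => if i ∈ S' then 1 else 0) :
      Fin n → ℝ) i) ^ 2 = if i ∈ S \ S' ∪ S' \ S then 1 else 0 := fun i => by
    by_cases hi : i ∈ S <;> by_cases hi' : i ∈ S' <;> simp [hi, hi']
  rw [vnorm, Fintype.sum_congr _ _ hsq, sum_ite_mem, univ_inter, sum_const, nsmul_one,
    card_union_of_disjoint disjoint_sdiff_sdiff, Nat.cast_add]

lemma vnorm_IS_mulVec_le (S : Finset (Fin n)) {z : Fin n → ℝ} {m : ℝ} (hm : 0 ≤ m)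
    (hz : ∀ i, |z i| ≤ m) : vnorm (IS S *ᵥ z) ≤ Real.sqrt #S * m := by
  rw [IS, ← vnorm_indicator]
  exact vnorm_diagonal_mulVec_le _ z hm hz

lemma vnorm_IS_sub_IS_mulVec_le (S S' : Finset (Fin n)) {z : Fin n → ℝ} {m : ℝ} (hm : 0 ≤ m)
    (hz : ∀ i, |z i| ≤ m) :
    vnorm ((IS S - IS S') *ᵥ z) ≤ Real.sqrt (#(S \ S') + #(S' \ S)) * m := by
  rw [IS, IS, diagonal_sub, ← vnorm_indicator_sub_indicator]
  exact vnorm_diagonal_mulVec_le _ z hm hz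

end Vnorm

section Projection

variable {n : ℕ}

lemma dotProduct_PF_mulVec {x : Fin n → ℝ} (hx : ∑ i, x i = 0) (w : Fin n → ℝ) :
    x ⬝ᵥ PF n *ᵥ w = x ⬝ᵥ w := by
  have hconst :
      (of fun _ _ => (1 : ℝ) : Matrix (Fin n) (Fin n) ℝ) *ᵥ w = fun _ => ∑ j, w j := by
    ext i; simp [mulVec, dotProduct]
  rw [PF, sub_mulVec, one_mulVec, smul_mulVec, hconst, dotProduct_sub, dotProduct_smul]
  simp [dotProduct, ← sum_mul, hx]

lemma dotProduct_eq_of_PF_mulVec_eq {x w w' : Fin n → ℝ} (hx : ∑ i, x i = 0)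
    (h : PF n *ᵥ w = PF n *ᵥ w') : x ⬝ᵥ w = x ⬝ᵥ w' := by
  rw [← dotProduct_PF_mulVec hx w, h, dotProduct_PF_mulVec hx]

end Projection

section Coercivity

variable {n : ℕ}

lemma dotProduct_IS_mulVec_self_nonneg (S : Finset (Fin n)) (x : Fin n → ℝ) :
    0 ≤ x ⬝ᵥ IS S *ᵥ x := by
  simp only [IS, mulVec_diagonal, dotProduct]
  exact sum_nonneg fun i _ => by split_ifs <;> nlinarith [sq_nonneg (x i)]

lemma IsLam1.mul_vnorm_sq_le {L : Matrix (Fin n) (Fin n) ℝ} {lam : ℝ} (h : IsLam1 L lam)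
    {x : Fin n → ℝ} (hx : ∑ i, x i = 0) : lam * vnorm x ^ 2 ≤ x ⬝ᵥ L *ᵥ x := by
  rw [vnorm_sq]
  rcases eq_or_ne x 0 with rfl | hx0
  · simp
  have hpos : 0 < ∑ i, x i ^ 2 := by
    obtain ⟨i, hi⟩ := Function.ne_iff.mp hx0
    exact sum_pos' (fun _ _ => sq_nonneg _) ⟨i, mem_univ i, sq_pos_of_ne_zero hi⟩
  exact (le_div_iff₀ hpos).mp (h.2 ⟨x, hx0, hx, rfl⟩)

lemma IsSparsifier.mul_vnorm_sq_le {LG LH : Matrix (Fin n) (Fin n) ℝ} {ε lam : ℝ}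
    (hsp : IsSparsifier LG LH ε) (hε : ε ≤ 1) (hlam : IsLam1 LG lam) {x : Fin n → ℝ}
    (hx : ∑ i, x i = 0) : (1 - ε) * lam * vnorm x ^ 2 ≤ x ⬝ᵥ LH *ᵥ x :=
  calc (1 - ε) * lam * vnorm x ^ 2 = (1 - ε) * (lam * vnorm x ^ 2) := mul_assoc _ _ _
    _ ≤ (1 - ε) * (x ⬝ᵥ LG *ᵥ x) :=
        mul_le_mul_of_nonneg_left (hlam.mul_vnorm_sq_le hx) (sub_nonneg.mpr hε)
    _ ≤ x ⬝ᵥ LH *ᵥ x := (hsp x).1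

lemma IsSparsifier.mul_vnorm_sq_le_smul_add_IS {LG LH : Matrix (Fin n) (Fin n) ℝ}
    {ε lam a : ℝ} (hsp : IsSparsifier LG LH ε) (hε : ε ≤ 1) (hlam : IsLam1 LG lam)
    (ha : 0 ≤ a) (S : Finset (Fin n)) {x : Fin n → ℝ} (hx : ∑ i, x i = 0) :
    a * (1 - ε) * lam * vnorm x ^ 2 ≤ x ⬝ᵥ (a • LH + IS S) *ᵥ x := by
  rw [add_mulVec, dotProduct_add, smul_mulVec, dotProduct_smul, smul_eq_mul]
  have := mul_le_mul_of_nonneg_left (hsp.mul_vnorm_sq_le hε hlam hx) ha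
  linarith [dotProduct_IS_mulVec_self_nonneg S x]

end Coercivity

lemma dotProduct_add_mulVec_sub_eq {m R : Type*} [Fintype m] [CommRing R]
    {B D D' : Matrix m m R} {x y f f' : m → R} (h : x ⬝ᵥ (B + D) *ᵥ f = x ⬝ᵥ D *ᵥ y)
    (h' : x ⬝ᵥ (B + D') *ᵥ f' = x ⬝ᵥ D' *ᵥ y) :
    x ⬝ᵥ (B + D) *ᵥ (f - f') = x ⬝ᵥ (D - D') *ᵥ (y - f') := by
  simp only [add_mulVec, sub_mulVec, mulVec_sub, dotProduct_add, dotProduct_sub] at h h' ⊢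
  linear_combination h - h'

lemma sqrt_two_mul_add_div_le {c k s : ℝ} (hc : 1 < c) (hk : 0 ≤ k) (hs : 0 ≤ s) :
    Real.sqrt 2 * (k + s * k / c) / c ≤
      1.5 * k * s / (c - 1) ^ 2 + Real.sqrt 2 * k / (c - 1) := by
  have hsqrt2 : Real.sqrt 2 ≤ 1.5 := Real.sqrt_le_iff.mpr ⟨by norm_num, by norm_num⟩
  have hc1 : 0 < c - 1 := sub_pos.mpr hc
  have hlin : Real.sqrt 2 * k / c ≤ Real.sqrt 2 * k / (c - 1) :=
    div_le_div_of_nonneg_left (by positivity) hc1 (by linarith)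
  have hquad : Real.sqrt 2 * (s * k) / c ^ 2 ≤ 1.5 * k * s / (c - 1) ^ 2 :=
    div_le_div₀ (by positivity) (by nlinarith [mul_nonneg hk hs]) (by positivity)
      (by nlinarith)
  calc Real.sqrt 2 * (k + s * k / c) / c
      = Real.sqrt 2 * (s * k) / c ^ 2 + Real.sqrt 2 * k / c := by
        field_simp
        ring
    _ ≤ _ := add_le_add hquad hlin

theorem stmt_2_general {n : ℕ}
    (AG AH : Matrix (Fin n) (Fin n) ℝ)
    (ε : ℝ) (hε1 : ε < 1)
    (hsp : IsSparsifier (Lap AG) (Lap AH) ε)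
    (γ : ℝ) (hγ : 0 < γ)
    (l : ℕ)
    (y : Fin n → ℝ) (k : ℝ) (hy : ∀ i, |y i| ≤ k)
    (lam1 : ℝ) (hlam1 : IsLam1 (Lap AG) lam1)
    (hmain : 1 < (l : ℝ) * γ * (1 - ε) * lam1)
    (S S' : Finset (Fin n)) (hS' : S'.card = l)
    (hdiff : (S \ S').card = 1) (hdiff' : (S' \ S).card = 1)
    (ft ft' : Fin n → ℝ)
    (hft : (∑ i, ft i = 0) ∧
      (PF n).mulVec ((((l : ℝ) * γ) • Lap AH + IS S).mulVec ft) =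
        (PF n).mulVec ((IS S).mulVec y))
    (hft' : (∑ i, ft' i = 0) ∧
      (PF n).mulVec ((((l : ℝ) * γ) • Lap AH + IS S').mulVec ft') =
        (PF n).mulVec ((IS S').mulVec y)) :
    vnorm (ft - ft') ≤
      1.5 * k * Real.sqrt l / ((l : ℝ) * γ * (1 - ε) * lam1 - 1) ^ 2 +
        Real.sqrt 2 * k / ((l : ℝ) * γ * (1 - ε) * lam1 - 1) := by
  obtain ⟨hf0, hf⟩ := hft
  obtain ⟨hf0', hf'⟩ := hft'
  set c := (l : ℝ) * γ * (1 - ε) * lam1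
  have hc : 0 < c := one_pos.trans hmain
  have hcoercive :=
    hsp.mul_vnorm_sq_le_smul_add_IS hε1.le hlam1 (mul_nonneg l.cast_nonneg hγ.le)
  obtain ⟨v, -⟩ := card_eq_one.mp hdiff'
  have hk : 0 ≤ k := (abs_nonneg _).trans (hy v)
  have hΔ0 : ∑ i, (ft - ft') i = 0 := by simp [sum_sub_distrib, hf0, hf0']
  have hf'_le : vnorm ft' ≤ Real.sqrt l * k / c := calc
    vnorm ft' ≤ vnorm (IS S' *ᵥ y) / c := vnorm_le_div_of_mul_vnorm_sq_le hc
        ((hcoercive S' hf0').trans_eq (dotProduct_eq_of_PF_mulVec_eq hf0' hf'))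
    _ ≤ Real.sqrt l * k / c := by
        gcongr
        simpa [hS'] using vnorm_IS_mulVec_le S' hk hy
  have hΔ_le : vnorm (ft - ft') ≤ Real.sqrt 2 * (k + vnorm ft') / c := calc
    vnorm (ft - ft') ≤ vnorm ((IS S - IS S') *ᵥ (y - ft')) / c :=
        vnorm_le_div_of_mul_vnorm_sq_le hc ((hcoercive S hΔ0).trans_eq
          (dotProduct_add_mulVec_sub_eq (dotProduct_eq_of_PF_mulVec_eq hΔ0 hf)
            (dotProduct_eq_of_PF_mulVec_eq hΔ0 hf')))
    _ ≤ Real.sqrt 2 * (k + vnorm ft') / c := by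
        gcongr
        have hz : ∀ i, |(y - ft') i| ≤ k + vnorm ft' := fun i =>
          (abs_sub _ _).trans (add_le_add (hy i) (abs_le_vnorm ft' i))
        have := vnorm_IS_sub_IS_mulVec_le S S' (add_nonneg hk (vnorm_nonneg _)) hz
        rwa [hdiff, hdiff', Nat.cast_one, one_add_one_eq_two] at this
  calc vnorm (ft - ft') ≤ Real.sqrt 2 * (k + Real.sqrt l * k / c) / c :=
        hΔ_le.trans (by gcongr)
    _ ≤ _ := sqrt_two_mul_add_div_le hmain hk (Real.sqrt_nonneg _)

/-- stability of sparse-HFS: if `S, S'` differ in exactly one element then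
`‖f̃_S − f̃_{S'}‖ ≤ 1.5·k·√l/(lγ(1−ε)λ₁ − 1)² + √2·k/(lγ(1−ε)λ₁ − 1)`. -/
theorem stmt_2 {n : ℕ} (hn : 2 ≤ n)
    (AG AH : Matrix (Fin n) (Fin n) ℝ)
    (hG : IsWeightedGraph AG) (hGc : GraphConnected AG)
    (hH : IsWeightedGraph AH)
    (ε : ℝ) (hε0 : 0 ≤ ε) (hε1 : ε < 1)
    (hsp : IsSparsifier (Lap AG) (Lap AH) ε)
    (γ : ℝ) (hγ : 0 < γ)
    (l : ℕ) (hl : 1 ≤ l) (hln : l ≤ n - 1)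
    (y : Fin n → ℝ) (k : ℝ) (hy : ∀ i, |y i| ≤ k)
    (lam1 : ℝ) (hlam1 : IsLam1 (Lap AG) lam1)
    (hmain : 1 < (l : ℝ) * γ * (1 - ε) * lam1)
    (S S' : Finset (Fin n)) (hS : S.card = l) (hS' : S'.card = l)
    (hdiff : (S \ S').card = 1) (hdiff' : (S' \ S).card = 1)
    (ft ft' : Fin n → ℝ)
    (hft : (∑ i, ft i = 0) ∧
      (PF n).mulVec ((((l : ℝ) * γ) • Lap AH + IS S).mulVec ft) =
        (PF n).mulVec ((IS S).mulVec y))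
    (hft' : (∑ i, ft' i = 0) ∧
      (PF n).mulVec ((((l : ℝ) * γ) • Lap AH + IS S').mulVec ft') =
        (PF n).mulVec ((IS S').mulVec y)) :
    vnorm (ft - ft') ≤
      1.5 * k * Real.sqrt l / ((l : ℝ) * γ * (1 - ε) * lam1 - 1) ^ 2 +
        Real.sqrt 2 * k / ((l : ℝ) * γ * (1 - ε) * lam1 - 1) :=
  stmt_2_general AG AH ε hε1 hsp γ hγ l y k hy lam1 hlam1 hmain S S' hS' hdiff hdiff' ft ft' hft
    hft'
end
end

section
/- Let G be a connected weighted graph on n ≥ 2 vertices with Laplacian L_G, and let H be a weighted graph on the same vertices whose Laplacian L_H makes it a (1±ε)-spectral sparsifier of G with 0 ≤ ε < 1. Let γ > 0, 1 ≤ l ≤ n−1, let y ∈ ℝⁿ satisfy |y_i| ≤ k for all i, assume lγ(1−ε)λ₁ > 1, and let S, S' be two size-l subsets of {1,…,n} differing in exactly one element. Then the unique g ∈ F with P_F((lγ·L_H + I_S)·g) = P_F(y_S − y_{S'}) satisfies ‖g‖₂ ≤ √2·k/(lγ(1−ε)λ₁ − 1). -/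
open Matrix BigOperators Finset
open scoped Classical

noncomputable section

set_option maxHeartbeats 1000000 in
/-- the term `‖A⁻¹(y_S − y_{S'})‖` in the stability proof is bounded by
`√2·k/(lγ(1−ε)λ₁ − 1)`. -/
theorem stmt_6 {n : ℕ} (hn : 2 ≤ n)
    (AG AH : Matrix (Fin n) (Fin n) ℝ)
    (hG : IsWeightedGraph AG) (hGc : GraphConnected AG)
    (hH : IsWeightedGraph AH)
    (ε : ℝ) (hε0 : 0 ≤ ε) (hε1 : ε < 1)
    (hsp : IsSparsifier (Lap AG) (Lap AH) ε)
    (γ : ℝ) (hγ : 0 < γ)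
    (l : ℕ) (hl : 1 ≤ l) (hln : l ≤ n - 1)
    (y : Fin n → ℝ) (k : ℝ) (hy : ∀ i, |y i| ≤ k)
    (lam1 : ℝ) (hlam1 : IsLam1 (Lap AG) lam1)
    (hmain : 1 < (l : ℝ) * γ * (1 - ε) * lam1)
    (S S' : Finset (Fin n)) (hS : S.card = l) (hS' : S'.card = l)
    (hdiff : (S \ S').card = 1) (hdiff' : (S' \ S).card = 1)
    (g : Fin n → ℝ)
    (hg : (∑ i, g i = 0) ∧
      (PF n).mulVec ((((l : ℝ) * γ) • Lap AH + IS S).mulVec g) =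
        (PF n).mulVec ((IS S).mulVec y - (IS S').mulVec y)) :
    vnorm g ≤ Real.sqrt 2 * k / ((l : ℝ) * γ * (1 - ε) * lam1 - 1) := by
  classical
  obtain ⟨hgsum, heq⟩ := hg
  have hk0 : 0 ≤ k := le_trans (abs_nonneg _) (hy ⟨0, by omega⟩)
  set D : ℝ := (l : ℝ) * γ * (1 - ε) * lam1 with hD
  have hden : 0 < D - 1 := by simpa using sub_pos.mpr hmain
  have hRHS0 : 0 ≤ Real.sqrt 2 * k / (D - 1) :=
    div_nonneg (mul_nonneg (Real.sqrt_nonneg _) hk0) hden.le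
  by_cases hg0 : g = 0
  · simpa [hg0, vnorm] using hRHS0
  -- basic quantities
  have hsq : 0 < ∑ i, g i ^ 2 := by
    have : ∃ i, g i ≠ 0 := by
      by_contra h; push_neg at h; exact hg0 (funext h)
    obtain ⟨i, hi⟩ := this
    refine Finset.sum_pos' (fun j _ => sq_nonneg _) ⟨i, Finset.mem_univ i, by positivity⟩
  set N : ℝ := vnorm g with hN
  have hN0 : 0 < N := Real.sqrt_pos.mpr hsq
  have hNsq : N ^ 2 = ∑ i, g i ^ 2 := Real.sq_sqrt hsq.le
  -- projection: g ⬝ᵥ PF w = g ⬝ᵥ w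
  have hPF : ∀ w : Fin n → ℝ, g ⬝ᵥ (PF n).mulVec w = g ⬝ᵥ w := by
    intro w
    have hw : ∀ i, (PF n).mulVec w i = w i - (n : ℝ)⁻¹ * ∑ j, w j := by
      intro i
      rw [PF, Matrix.sub_mulVec, Pi.sub_apply, Matrix.one_mulVec, Matrix.smul_mulVec,
        Pi.smul_apply, smul_eq_mul]
      congr 1
      simp [Matrix.mulVec, dotProduct]
    calc g ⬝ᵥ (PF n).mulVec w
        = ∑ i, (g i * w i - g i * ((n : ℝ)⁻¹ * ∑ j, w j)) := by
          simp [dotProduct, hw, mul_sub]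
      _ = g ⬝ᵥ w := by
          rw [Finset.sum_sub_distrib, ← Finset.sum_mul, hgsum]
          simp [dotProduct]
  -- the dot-product equation
  set v : Fin n → ℝ := (IS S).mulVec y - (IS S').mulVec y with hv
  have hdot : g ⬝ᵥ ((((l : ℝ) * γ) • Lap AH + IS S).mulVec g) = g ⬝ᵥ v := by
    calc g ⬝ᵥ ((((l : ℝ) * γ) • Lap AH + IS S).mulVec g)
        = g ⬝ᵥ (PF n).mulVec ((((l : ℝ) * γ) • Lap AH + IS S).mulVec g) := (hPF _).symm
      _ = g ⬝ᵥ (PF n).mulVec v := by rw [heq]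
      _ = g ⬝ᵥ v := hPF _
  -- expand the quadratic form
  have hquad : g ⬝ᵥ ((((l : ℝ) * γ) • Lap AH + IS S).mulVec g)
      = ((l : ℝ) * γ) * (g ⬝ᵥ (Lap AH).mulVec g) + g ⬝ᵥ (IS S).mulVec g := by
    simp [Matrix.add_mulVec, Matrix.smul_mulVec, dotProduct_add,
      dotProduct_smul, smul_eq_mul]
  have hIS : 0 ≤ g ⬝ᵥ (IS S).mulVec g := by
    unfold IS
    rw [dotProduct]
    refine Finset.sum_nonneg fun i _ => ?_
    rw [Matrix.mulVec_diagonal]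
    by_cases h : i ∈ S <;> simp [h, mul_self_nonneg]
  -- eigenvalue bound
  have hlamG : lam1 * (∑ i, g i ^ 2) ≤ g ⬝ᵥ (Lap AG).mulVec g := by
    have hmem : (g ⬝ᵥ (Lap AG).mulVec g) / (∑ i, g i ^ 2) ∈
        {r | ∃ x : Fin n → ℝ, x ≠ 0 ∧ (∑ i, x i) = 0 ∧
          r = (x ⬝ᵥ (Lap AG).mulVec x) / (∑ i, (x i) ^ 2)} := ⟨g, hg0, hgsum, rfl⟩
    have := hlam1.2 hmem
    rw [le_div_iff₀ hsq] at this
    linarith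
  have hsparse : (1 - ε) * (g ⬝ᵥ (Lap AG).mulVec g) ≤ g ⬝ᵥ (Lap AH).mulVec g := (hsp g).1
  -- lower bound on quadratic form
  have hlγ : 0 < (l : ℝ) * γ := by
    have : (0:ℝ) < (l:ℝ) := by exact_mod_cast hl
    positivity
  have hε' : 0 ≤ 1 - ε := by linarith
  have hlow : D * N ^ 2 ≤ g ⬝ᵥ v := by
    rw [← hdot, hquad, hNsq]
    have h1 : (1 - ε) * (lam1 * (∑ i, g i ^ 2)) ≤ (1 - ε) * (g ⬝ᵥ (Lap AG).mulVec g) :=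
      mul_le_mul_of_nonneg_left hlamG hε'
    have h2 : ((l : ℝ) * γ) * ((1 - ε) * (lam1 * (∑ i, g i ^ 2)))
        ≤ ((l : ℝ) * γ) * (g ⬝ᵥ (Lap AH).mulVec g) :=
      mul_le_mul_of_nonneg_left (le_trans h1 hsparse) hlγ.le
    nlinarith [hIS]
  -- bound on ‖v‖
  have hvsq : ∑ i, v i ^ 2 ≤ 2 * k ^ 2 := by
    have hvi : ∀ i, v i = ((if i ∈ S then (1:ℝ) else 0) - (if i ∈ S' then (1:ℝ) else 0)) * y i := by
      intro i
      simp [hv, IS, Matrix.mulVec_diagonal, sub_mul]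
    have hterm : ∀ i, v i ^ 2 ≤ k ^ 2 := by
      intro i
      have hy2 : y i ^ 2 ≤ k ^ 2 := by
        have := hy i
        nlinarith [abs_nonneg (y i), sq_abs (y i)]
      by_cases h1 : i ∈ S <;> by_cases h2 : i ∈ S' <;>
        simp [hvi i, h1, h2, hy2] <;> positivity
    have hzero : ∀ i ∈ Finset.univ, i ∉ (S \ S') ∪ (S' \ S) → v i ^ 2 = 0 := by
      intro i _ hi
      rw [Finset.mem_union, Finset.mem_sdiff, Finset.mem_sdiff] at hi
      push_neg at hi
      by_cases h1 : i ∈ S <;> by_cases h2 : i ∈ S' <;>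
        simp_all [hvi i, h1, h2]
    calc ∑ i, v i ^ 2 = ∑ i ∈ (S \ S') ∪ (S' \ S), v i ^ 2 :=
          (Finset.sum_subset (Finset.subset_univ _) hzero).symm
      _ ≤ ∑ _i ∈ (S \ S') ∪ (S' \ S), k ^ 2 :=
          Finset.sum_le_sum fun i _ => hterm i
      _ = ((S \ S') ∪ (S' \ S)).card * k ^ 2 := by
          rw [Finset.sum_const, nsmul_eq_mul]
      _ ≤ 2 * k ^ 2 := by
          have hc : (((S \ S') ∪ (S' \ S)).card : ℝ) ≤ 2 := by
            have := Finset.card_union_le (S \ S') (S' \ S)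
            rw [hdiff, hdiff'] at this
            exact_mod_cast this
          nlinarith [sq_nonneg k]
  -- Cauchy–Schwarz
  have hCS : g ⬝ᵥ v ≤ N * (Real.sqrt 2 * k) := by
    have h1 : (∑ i, g i * v i) ^ 2 ≤ (∑ i, g i ^ 2) * (∑ i, v i ^ 2) :=
      Finset.sum_mul_sq_le_sq_mul_sq Finset.univ g v
    have h2 : (g ⬝ᵥ v) ^ 2 ≤ (∑ i, g i ^ 2) * (2 * k ^ 2) := by
      refine le_trans (by simpa [dotProduct] using h1) ?_
      exact mul_le_mul_of_nonneg_left hvsq hsq.le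
    have h3 : (0:ℝ) ≤ N * (Real.sqrt 2 * k) :=
      mul_nonneg hN0.le (mul_nonneg (Real.sqrt_nonneg _) hk0)
    have h4 : (N * (Real.sqrt 2 * k)) ^ 2 = (∑ i, g i ^ 2) * (2 * k ^ 2) := by
      have : Real.sqrt 2 ^ 2 = 2 := Real.sq_sqrt (by norm_num)
      rw [mul_pow, mul_pow, hNsq, this]
    nlinarith [abs_nonneg (g ⬝ᵥ v), sq_abs (g ⬝ᵥ v), le_abs_self (g ⬝ᵥ v)]
  -- conclusion
  have hDN : D * N ≤ Real.sqrt 2 * k := by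
    have := le_trans hlow hCS
    nlinarith
  rw [le_div_iff₀ hden]
  nlinarith
end
end

section
/- Let G be a connected weighted graph on n ≥ 2 vertices with Laplacian L_G, let γ > 0, let S be a nonempty subset of {1,…,n} of size l, and let y ∈ ℝⁿ. Then the function f ↦ (1/l)·(f − y)ᵀ·I_S·(f − y) + γ·fᵀ·L_G·f has a unique minimizer over ℝⁿ, given by f̂ = (γ·l·L_G + I_S)⁻¹·I_S·y. -/
open Matrix BigOperators Finset
open scoped Classical

noncomputable section

/-!
Write `J` for the objective, `M = γ l L_G + I_S` and `f̂ = M⁻¹ I_S y`. Since `M f̂ = I_S y`,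
completing the square gives `J f = J f̂ + (1/l) (f - f̂)ᵀ M (f - f̂)`, so everything reduces to
`M` being positive definite. As `xᵀ L_G x = ½ ∑ A_ij (x_i - x_j)²`, a vector with `xᵀ M x = 0`
is constant along the edges, hence constant because `G` is connected, and then
`xᵀ I_S x = ∑_{i ∈ S} x_i² = 0` makes that constant `0`.
-/

lemma SimpleGraph.Reachable.eq_of_forall_adj {V β : Type*} {G : SimpleGraph V} {f : V → β}
    (hf : ∀ u v, G.Adj u v → f u = f v) {i j : V} (hij : G.Reachable i j) : f i = f j := by
  obtain ⟨w⟩ := hij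
  induction w with
  | nil => rfl
  | cons hadj _ ih => exact (hf _ _ hadj).trans ih

lemma GraphConnected.eq_of_forall_pos {n : ℕ} {A : Matrix (Fin n) (Fin n) ℝ}
    (hA : GraphConnected A) {x : Fin n → ℝ} (hx : ∀ i j, 0 < A i j → x i = x j) (i j : Fin n) :
    x i = x j := by
  refine (hA.preconnected i j).eq_of_forall_adj fun u v huv => ?_
  rcases (SimpleGraph.fromRel_adj _ u v).mp huv with ⟨-, huv | hvu⟩
  · exact hx u v huv
  · exact (hx v u hvu).symm

lemma sub_dotProduct_mulVec_sub {ι : Type*} [Fintype ι] {N : Matrix ι ι ℝ} (hN : N.IsSymm)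
    (u v : ι → ℝ) :
    (u - v) ⬝ᵥ N *ᵥ (u - v) = u ⬝ᵥ N *ᵥ u - 2 * (u ⬝ᵥ N *ᵥ v) + v ⬝ᵥ N *ᵥ v := by
  have : v ⬝ᵥ N *ᵥ u = u ⬝ᵥ N *ᵥ v := by
    rw [dotProduct_mulVec, ← mulVec_transpose, hN, dotProduct_comm]
  rw [mulVec_sub, dotProduct_sub, sub_dotProduct, sub_dotProduct, this]
  ring

section Laplacian

variable {n : ℕ} {A : Matrix (Fin n) (Fin n) ℝ}

lemma dotProduct_lap_mulVec (x : Fin n → ℝ) :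
    x ⬝ᵥ Lap A *ᵥ x = ∑ i, ∑ j, A i j * x i * (x i - x j) := by
  rw [Lap, sub_mulVec, dotProduct_sub]
  simp only [dotProduct, mulVec_diagonal]
  simp only [mulVec, dotProduct, mul_sub, Finset.mul_sum, Finset.sum_mul, Finset.sum_sub_distrib]
  congr 1 <;> exact Finset.sum_congr rfl fun i _ => Finset.sum_congr rfl fun j _ => by ring

lemma two_mul_dotProduct_lap_mulVec (hA : A.IsSymm) (x : Fin n → ℝ) :
    2 * (x ⬝ᵥ Lap A *ᵥ x) = ∑ i, ∑ j, A i j * (x i - x j) ^ 2 := by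
  rw [dotProduct_lap_mulVec, two_mul]
  nth_rewrite 2 [Finset.sum_comm]
  rw [← Finset.sum_add_distrib]
  refine Finset.sum_congr rfl fun i _ => ?_
  rw [← Finset.sum_add_distrib]
  refine Finset.sum_congr rfl fun j _ => ?_
  rw [hA.apply i j]
  ring

lemma lap_isSymm (hA : A.IsSymm) : (Lap A).IsSymm := by
  rw [Lap, IsSymm, transpose_sub, diagonal_transpose, hA]

lemma dotProduct_lap_mulVec_nonneg (hA : A.IsSymm) (hA0 : ∀ i j, 0 ≤ A i j)
    (x : Fin n → ℝ) : 0 ≤ x ⬝ᵥ Lap A *ᵥ x := by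
  have hsum : 0 ≤ ∑ i, ∑ j, A i j * (x i - x j) ^ 2 :=
    Finset.sum_nonneg fun i _ => Finset.sum_nonneg fun j _ => mul_nonneg (hA0 i j) (sq_nonneg _)
  linarith [two_mul_dotProduct_lap_mulVec hA x]

lemma eq_of_dotProduct_lap_mulVec_eq_zero (hA : A.IsSymm) (hA0 : ∀ i j, 0 ≤ A i j)
    {x : Fin n → ℝ} (hx : x ⬝ᵥ Lap A *ᵥ x = 0) {i j : Fin n} (hij : 0 < A i j) : x i = x j := by
  have hsum : ∑ i, ∑ j, A i j * (x i - x j) ^ 2 = 0 := by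
    rw [← two_mul_dotProduct_lap_mulVec hA, hx, mul_zero]
  have hterm : A i j * (x i - x j) ^ 2 = 0 := by
    have hnonneg (i j) : 0 ≤ A i j * (x i - x j) ^ 2 := mul_nonneg (hA0 i j) (sq_nonneg _)
    rw [Fintype.sum_eq_zero_iff_of_nonneg fun i => Finset.sum_nonneg fun j _ => hnonneg i j]
      at hsum
    exact congrFun ((Fintype.sum_eq_zero_iff_of_nonneg (hnonneg i)).mp (congrFun hsum i)) j
  simpa [hij.ne', sub_eq_zero] using hterm

end Laplacian

section Objective

variable {n : ℕ}

lemma dotProduct_IS_mulVec (S : Finset (Fin n)) (x : Fin n → ℝ) :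
    x ⬝ᵥ IS S *ᵥ x = ∑ i ∈ S, x i ^ 2 := by
  simp [IS, dotProduct, mulVec_diagonal, Finset.sum_ite_mem, sq]

lemma IS_isSymm (S : Finset (Fin n)) : (IS S).IsSymm :=
  isSymm_diagonal _

lemma posDef_smul_lap_add_IS {A : Matrix (Fin n) (Fin n) ℝ} (hAs : A.IsSymm)
    (hA0 : ∀ i j, 0 ≤ A i j) (hAc : GraphConnected A) {c : ℝ} (hc : 0 < c)
    {S : Finset (Fin n)} (hS : S.Nonempty) :
    (c • Lap A + IS S).PosDef := by
  refine .of_dotProduct_mulVec_pos (isHermitian_iff_isSymm.mpr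
    (((lap_isSymm hAs).smul c).add (IS_isSymm S))) fun x hx => ?_
  rw [star_trivial, add_mulVec, smul_mulVec, dotProduct_add, dotProduct_smul, smul_eq_mul]
  have hL := dotProduct_lap_mulVec_nonneg hAs hA0 x
  have hI : 0 ≤ x ⬝ᵥ IS S *ᵥ x := by
    rw [dotProduct_IS_mulVec]; positivity
  refine lt_of_le_of_ne (by positivity) fun h0 => hx ?_
  have hL0 : x ⬝ᵥ Lap A *ᵥ x = 0 := by nlinarith
  have hI0 : ∑ i ∈ S, x i ^ 2 = 0 := by
    rw [hL0, mul_zero, zero_add, dotProduct_IS_mulVec] at h0; exact h0.symm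
  obtain ⟨i₀, hi₀⟩ := hS
  have hx₀ : x i₀ = 0 :=
    pow_eq_zero_iff two_ne_zero |>.mp ((Finset.sum_eq_zero_iff_of_nonneg fun i _ =>
      sq_nonneg (x i)).mp hI0 i₀ hi₀)
  funext i
  rw [hAc.eq_of_forall_pos (fun _ _ => eq_of_dotProduct_lap_mulVec_eq_zero hAs hA0 hL0) i i₀,
    hx₀, Pi.zero_apply]

lemma regularizedLoss_eq {L P : Matrix (Fin n) (Fin n) ℝ} (hL : L.IsSymm) (hP : P.IsSymm)
    {γ l : ℝ} (hl : l ≠ 0) {y g : Fin n → ℝ} (hg : ((γ * l) • L + P) *ᵥ g = P *ᵥ y)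
    (f : Fin n → ℝ) :
    1 / l * ((f - y) ⬝ᵥ P *ᵥ (f - y)) + γ * (f ⬝ᵥ L *ᵥ f) =
      1 / l * ((f - g) ⬝ᵥ ((γ * l) • L + P) *ᵥ (f - g)) +
        (1 / l * ((g - y) ⬝ᵥ P *ᵥ (g - y)) + γ * (g ⬝ᵥ L *ᵥ g)) := by
  have hM (u v : Fin n → ℝ) :
      u ⬝ᵥ ((γ * l) • L + P) *ᵥ v = γ * l * (u ⬝ᵥ L *ᵥ v) + u ⬝ᵥ P *ᵥ v := by
    rw [add_mulVec, smul_mulVec, dotProduct_add, dotProduct_smul, smul_eq_mul]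
  have hcross (u : Fin n → ℝ) : γ * l * (u ⬝ᵥ L *ᵥ g) + u ⬝ᵥ P *ᵥ g = u ⬝ᵥ P *ᵥ y := by
    rw [← hM, hg]
  rw [sub_dotProduct_mulVec_sub hP, sub_dotProduct_mulVec_sub ((hL.smul _).add hP),
    sub_dotProduct_mulVec_sub hP, hM, hM, hM]
  field_simp
  linear_combination 2 * hcross f - 2 * hcross g

end Objective

theorem stmt_13_general {n : ℕ}
    (AG : Matrix (Fin n) (Fin n) ℝ)
    (hG : IsWeightedGraph AG) (hGc : GraphConnected AG)
    (γ : ℝ) (hγ : 0 < γ)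
    (S : Finset (Fin n)) (hS : S.Nonempty) (l : ℕ) (hl : S.card = l)
    (y : Fin n → ℝ) :
    (∀ f : Fin n → ℝ,
      (1 / (l : ℝ)) *
          ((((γ * (l : ℝ)) • Lap AG + IS S)⁻¹.mulVec ((IS S).mulVec y) - y) ⬝ᵥ
            (IS S).mulVec
              (((γ * (l : ℝ)) • Lap AG + IS S)⁻¹.mulVec ((IS S).mulVec y) - y)) +
        γ * ((((γ * (l : ℝ)) • Lap AG + IS S)⁻¹.mulVec ((IS S).mulVec y)) ⬝ᵥ
          (Lap AG).mulVec (((γ * (l : ℝ)) • Lap AG + IS S)⁻¹.mulVec ((IS S).mulVec y))) ≤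
      (1 / (l : ℝ)) * ((f - y) ⬝ᵥ (IS S).mulVec (f - y)) +
        γ * (f ⬝ᵥ (Lap AG).mulVec f)) ∧
    ∀ f : Fin n → ℝ,
      (1 / (l : ℝ)) * ((f - y) ⬝ᵥ (IS S).mulVec (f - y)) +
          γ * (f ⬝ᵥ (Lap AG).mulVec f) =
        (1 / (l : ℝ)) *
            ((((γ * (l : ℝ)) • Lap AG + IS S)⁻¹.mulVec ((IS S).mulVec y) - y) ⬝ᵥ
              (IS S).mulVec
                (((γ * (l : ℝ)) • Lap AG + IS S)⁻¹.mulVec ((IS S).mulVec y) - y)) +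
          γ * ((((γ * (l : ℝ)) • Lap AG + IS S)⁻¹.mulVec ((IS S).mulVec y)) ⬝ᵥ
            (Lap AG).mulVec
              (((γ * (l : ℝ)) • Lap AG + IS S)⁻¹.mulVec ((IS S).mulVec y))) →
      f = ((γ * (l : ℝ)) • Lap AG + IS S)⁻¹.mulVec ((IS S).mulVec y) := by
  have hlpos : 0 < (l : ℝ) := by
    rw [← hl]; exact_mod_cast hS.card_pos
  have hM := posDef_smul_lap_add_IS hG.1 hG.2.1 hGc (mul_pos hγ hlpos) hS
  set M := (γ * (l : ℝ)) • Lap AG + IS S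
  set fOpt := M⁻¹ *ᵥ (IS S *ᵥ y)
  have hMfOpt : M *ᵥ fOpt = IS S *ᵥ y := by
    rw [mulVec_mulVec, mul_nonsing_inv _ ((isUnit_iff_isUnit_det M).mp hM.isUnit), one_mulVec]
  have hloss := regularizedLoss_eq (lap_isSymm hG.1) (IS_isSymm S) hlpos.ne' hMfOpt
  have hgap (f : Fin n → ℝ) : 0 ≤ 1 / (l : ℝ) * ((f - fOpt) ⬝ᵥ M *ᵥ (f - fOpt)) := by
    have hq := hM.posSemidef.dotProduct_mulVec_nonneg (f - fOpt)
    rw [star_trivial] at hq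
    exact mul_nonneg (by positivity) hq
  refine ⟨fun f => ?_, fun f hf => ?_⟩
  · rw [hloss f]
    linarith [hgap f]
  · by_contra hne
    have hq := hM.dotProduct_mulVec_pos (sub_ne_zero.mpr hne)
    rw [star_trivial] at hq
    have hgap_pos : 0 < 1 / (l : ℝ) * ((f - fOpt) ⬝ᵥ M *ᵥ (f - fOpt)) :=
      mul_pos (by positivity) hq
    rw [hloss f] at hf
    linarith

/-- the Laplacian-regularized least-squares objective has the unique
minimizer `f̂ = (γ·l·L_G + I_S)⁻¹·I_S·y`. -/
theorem stmt_13 {n : ℕ} (hn : 2 ≤ n)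
    (AG : Matrix (Fin n) (Fin n) ℝ)
    (hG : IsWeightedGraph AG) (hGc : GraphConnected AG)
    (γ : ℝ) (hγ : 0 < γ)
    (S : Finset (Fin n)) (hS : S.Nonempty) (l : ℕ) (hl : S.card = l)
    (y : Fin n → ℝ) :
    (∀ f : Fin n → ℝ,
      (1 / (l : ℝ)) *
          ((((γ * (l : ℝ)) • Lap AG + IS S)⁻¹.mulVec ((IS S).mulVec y) - y) ⬝ᵥ
            (IS S).mulVec
              (((γ * (l : ℝ)) • Lap AG + IS S)⁻¹.mulVec ((IS S).mulVec y) - y)) +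
        γ * ((((γ * (l : ℝ)) • Lap AG + IS S)⁻¹.mulVec ((IS S).mulVec y)) ⬝ᵥ
          (Lap AG).mulVec (((γ * (l : ℝ)) • Lap AG + IS S)⁻¹.mulVec ((IS S).mulVec y))) ≤
      (1 / (l : ℝ)) * ((f - y) ⬝ᵥ (IS S).mulVec (f - y)) +
        γ * (f ⬝ᵥ (Lap AG).mulVec f)) ∧
    ∀ f : Fin n → ℝ,
      (1 / (l : ℝ)) * ((f - y) ⬝ᵥ (IS S).mulVec (f - y)) +
          γ * (f ⬝ᵥ (Lap AG).mulVec f) =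
        (1 / (l : ℝ)) *
            ((((γ * (l : ℝ)) • Lap AG + IS S)⁻¹.mulVec ((IS S).mulVec y) - y) ⬝ᵥ
              (IS S).mulVec
                (((γ * (l : ℝ)) • Lap AG + IS S)⁻¹.mulVec ((IS S).mulVec y) - y)) +
          γ * ((((γ * (l : ℝ)) • Lap AG + IS S)⁻¹.mulVec ((IS S).mulVec y)) ⬝ᵥ
            (Lap AG).mulVec
              (((γ * (l : ℝ)) • Lap AG + IS S)⁻¹.mulVec ((IS S).mulVec y))) →
      f = ((γ * (l : ℝ)) • Lap AG + IS S)⁻¹.mulVec ((IS S).mulVec y) :=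
  stmt_13_general AG hG hGc γ hγ S hS l hl y
end
end

section
/- Let G be a connected weighted graph on n ≥ 2 vertices with Laplacian L_G, and let H be a weighted graph on the same vertices whose Laplacian L_H makes it a (1±ε)-spectral sparsifier of G with 0 ≤ ε < 1. Then for all x ∈ ℝⁿ: (1/(1+ε))·xᵀL_G⁺x ≤ xᵀL_H⁺x ≤ (1/(1−ε))·xᵀL_G⁺x, where L_G⁺ and L_H⁺ are the Moore–Penrose pseudoinverses of L_G and L_H. -/
/-! For positive semidefinite `L`, the concave function `y ↦ 2⟪L u, y⟫ - ⟪y, L y⟫` is maximised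
at `y = u`, and at `u = L⁺x` its maximum is `xᵀL⁺x`. Testing this bound for `L_A` at
`y = c • L_B⁺x`, where `c • L_A ≤ L_B` in the Loewner order, gives `c • xᵀL_B⁺x ≤ xᵀL_A⁺x`, as long as
the projection `L_A L_A⁺` fixes `L_B⁺x`; this holds when `ker L_A ⊆ ker L_B`. The two sparsifier
inequalities give these hypotheses in both directions, with `c = 1 - ε` and `c = 1 / (1 + ε)`. -/

open Matrix BigOperators Finset
open scoped Classical

noncomputable section

theorem Matrix.IsSymm.mulVec_dotProduct {ι R : Type*} [Fintype ι] [CommSemiring R]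
    {M : Matrix ι ι R} (hM : M.IsSymm) (x y : ι → R) : M *ᵥ x ⬝ᵥ y = x ⬝ᵥ M *ᵥ y := by
  rw [dotProduct_mulVec, ← mulVec_transpose, hM.eq]

theorem Matrix.PosSemidef.two_mul_dotProduct_sub_le {ι : Type*} [Fintype ι] {A : Matrix ι ι ℝ}
    (hA : A.PosSemidef) (u y : ι → ℝ) :
    2 * (A *ᵥ u ⬝ᵥ y) - y ⬝ᵥ A *ᵥ y ≤ u ⬝ᵥ A *ᵥ u := by
  have hsymm : A.IsSymm := isHermitian_iff_isSymm.mp hA.1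
  have h := hA.dotProduct_mulVec_nonneg (y - u)
  simp only [star_trivial, mulVec_sub, dotProduct_sub, sub_dotProduct] at h
  linarith [dotProduct_comm y (A *ᵥ u), hsymm.mulVec_dotProduct u y]

theorem Matrix.PosSemidef.mulVec_eq_zero_of_le {ι : Type*} [Fintype ι] {A B : Matrix ι ι ℝ}
    (hB : B.PosSemidef) {C : ℝ} (hBA : ∀ y, y ⬝ᵥ B *ᵥ y ≤ C * (y ⬝ᵥ A *ᵥ y))
    {z : ι → ℝ} (hz : A *ᵥ z = 0) : B *ᵥ z = 0 := by
  have hle : z ⬝ᵥ B *ᵥ z ≤ 0 := by simpa [hz] using hBA z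
  have hge : 0 ≤ z ⬝ᵥ B *ᵥ z := by simpa using hB.dotProduct_mulVec_nonneg z
  exact (hB.dotProduct_mulVec_zero_iff z).mp (by rw [star_trivial]; linarith)

theorem isSymm_Lap {n : ℕ} {A : Matrix (Fin n) (Fin n) ℝ} (hA : A.IsSymm) : (Lap A).IsSymm := by
  rw [Lap, IsSymm, transpose_sub, diagonal_transpose, hA.eq]

theorem two_mul_dotProduct_Lap_mulVec {n : ℕ} {A : Matrix (Fin n) (Fin n) ℝ} (hA : A.IsSymm)
    (x : Fin n → ℝ) : 2 * (x ⬝ᵥ Lap A *ᵥ x) = ∑ i, ∑ j, A i j * (x i - x j) ^ 2 := by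
  have hrow : x ⬝ᵥ Lap A *ᵥ x = ∑ i, ∑ j, A i j * (x i * (x i - x j)) := by
    rw [Lap, sub_mulVec, dotProduct_sub]
    simp only [dotProduct, mulVec_diagonal]
    simp only [mulVec, dotProduct, Finset.mul_sum, Finset.sum_mul, ← Finset.sum_sub_distrib]
    exact Finset.sum_congr rfl fun i _ => Finset.sum_congr rfl fun j _ => by ring
  have hcol : x ⬝ᵥ Lap A *ᵥ x = ∑ i, ∑ j, A i j * (x j * (x j - x i)) := by
    rw [hrow, Finset.sum_comm]
    exact Finset.sum_congr rfl fun i _ => Finset.sum_congr rfl fun j _ => by rw [hA.apply]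
  rw [two_mul]
  nth_rw 1 [hrow]
  rw [hcol]
  simp only [← Finset.sum_add_distrib]
  exact Finset.sum_congr rfl fun i _ => Finset.sum_congr rfl fun j _ => by ring

theorem IsWeightedGraph.posSemidef_Lap {n : ℕ} {A : Matrix (Fin n) (Fin n) ℝ}
    (hA : IsWeightedGraph A) : (Lap A).PosSemidef := by
  refine .of_dotProduct_mulVec_nonneg (isHermitian_iff_isSymm.mpr (isSymm_Lap hA.1)) fun x => ?_
  have h := two_mul_dotProduct_Lap_mulVec hA.1 x
  have : 0 ≤ ∑ i, ∑ j, A i j * (x i - x j) ^ 2 :=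
    Finset.sum_nonneg fun i _ => Finset.sum_nonneg fun j _ => mul_nonneg (hA.2.1 i j) (sq_nonneg _)
  rw [star_trivial]
  linarith

namespace IsMoorePenrose

variable {n : ℕ} {L P Q : Matrix (Fin n) (Fin n) ℝ}

theorem unique (hP : IsMoorePenrose L P) (hQ : IsMoorePenrose L Q) : P = Q := by
  obtain ⟨hP1, hP2, hP3, hP4⟩ := hP
  obtain ⟨hQ1, hQ2, hQ3, hQ4⟩ := hQ
  have hLP : L * P = L * Q :=
    calc L * P = (L * Q) * (L * P) := by rw [← Matrix.mul_assoc, hQ1]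
      _ = ((L * P) * (L * Q))ᵀ := by rw [transpose_mul, hQ3.eq, hP3.eq]
      _ = L * Q := by rw [← Matrix.mul_assoc, hP1, hQ3.eq]
  have hPL : P * L = Q * L :=
    calc P * L = (P * L) * (Q * L) := by rw [Matrix.mul_assoc, ← Matrix.mul_assoc L, hQ1]
      _ = ((Q * L) * (P * L))ᵀ := by rw [transpose_mul, hQ4.eq, hP4.eq]
      _ = Q * L := by rw [Matrix.mul_assoc, ← Matrix.mul_assoc L, hP1, hQ4.eq]
  calc P = P * L * P := hP2.symm
    _ = Q * L * Q := by rw [Matrix.mul_assoc, hLP, ← Matrix.mul_assoc, hPL]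
    _ = Q := hQ2

theorem transpose (hP : IsMoorePenrose L P) : IsMoorePenrose Lᵀ Pᵀ := by
  obtain ⟨hP1, hP2, hP3, hP4⟩ := hP
  refine ⟨?_, ?_, ?_, ?_⟩
  · rw [← transpose_mul, ← transpose_mul, ← Matrix.mul_assoc, hP1]
  · rw [← transpose_mul, ← transpose_mul, ← Matrix.mul_assoc, hP2]
  · rw [← transpose_mul]; exact hP4.transpose
  · rw [← transpose_mul]; exact hP3.transpose

theorem isSymm (hL : L.IsSymm) (hP : IsMoorePenrose L P) : P.IsSymm := by
  have hPt := hP.transpose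
  rw [hL.eq] at hPt
  exact (hP.unique hPt).symm

theorem commute (hL : L.IsSymm) (hP : IsMoorePenrose L P) : L * P = P * L := by
  rw [← hP.2.2.1.eq, transpose_mul, (hP.isSymm hL).eq, hL.eq]

theorem mulVec_eq_zero (hL : L.IsSymm) (hP : IsMoorePenrose L P) {z : Fin n → ℝ}
    (hz : L *ᵥ z = 0) : P *ᵥ z = 0 := by
  rw [← hP.2.1, Matrix.mul_assoc, hP.commute hL]
  simp only [← mulVec_mulVec, hz, mulVec_zero]

theorem mulVec_mulVec_of_orthogonal (hL : L.IsSymm) (hP : IsMoorePenrose L P) {x : Fin n → ℝ}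
    (hx : ∀ z, L *ᵥ z = 0 → x ⬝ᵥ z = 0) : L *ᵥ P *ᵥ x = x := by
  have hLLP : L * L * P = L := by
    rw [Matrix.mul_assoc, hP.commute hL, ← Matrix.mul_assoc, hP.1]
  set r := x - L *ᵥ P *ᵥ x
  have hr : L *ᵥ r = 0 := by
    rw [mulVec_sub, mulVec_mulVec, mulVec_mulVec, hLLP, sub_self]
  have hrr : r ⬝ᵥ r = 0 := by
    rw [sub_dotProduct, hx r hr, hL.mulVec_dotProduct, hr, dotProduct_zero, sub_zero]
  exact (sub_eq_zero.mp (dotProduct_self_eq_zero.mp hrr)).symm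

theorem mulVec_dotProduct_mulVec_mulVec (hL : L.IsSymm) (hP : IsMoorePenrose L P)
    (x : Fin n → ℝ) : P *ᵥ x ⬝ᵥ L *ᵥ P *ᵥ x = x ⬝ᵥ P *ᵥ x := by
  rw [(hP.isSymm hL).mulVec_dotProduct, mulVec_mulVec, mulVec_mulVec, hP.2.1]

theorem mul_dotProduct_mulVec_le {n : ℕ} {A B PA PB : Matrix (Fin n) (Fin n) ℝ}
    (hA : A.PosSemidef) (hB : B.IsSymm) (hPA : IsMoorePenrose A PA) (hPB : IsMoorePenrose B PB)
    (hker : ∀ z, A *ᵥ z = 0 → B *ᵥ z = 0) {c : ℝ} (hc : 0 ≤ c)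
    (hAB : ∀ y, c * (y ⬝ᵥ A *ᵥ y) ≤ y ⬝ᵥ B *ᵥ y) (x : Fin n → ℝ) :
    c * (x ⬝ᵥ PB *ᵥ x) ≤ x ⬝ᵥ PA *ᵥ x := by
  have hAs : A.IsSymm := isHermitian_iff_isSymm.mp hA.1
  set w := PB *ᵥ x
  have hw : A *ᵥ PA *ᵥ w = w := hPA.mulVec_mulVec_of_orthogonal hAs fun z hz => by
    rw [(hPB.isSymm hB).mulVec_dotProduct, hPB.mulVec_eq_zero hB (hker z hz), dotProduct_zero]
  have hxw : A *ᵥ PA *ᵥ x ⬝ᵥ w = x ⬝ᵥ w := by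
    rw [mulVec_mulVec, hPA.2.2.1.mulVec_dotProduct, ← mulVec_mulVec, hw]
  have hwAw : c * (w ⬝ᵥ A *ᵥ w) ≤ x ⬝ᵥ w := hPB.mulVec_dotProduct_mulVec_mulVec hB x ▸ hAB w
  have hvar := hA.two_mul_dotProduct_sub_le (PA *ᵥ x) (c • w)
  rw [hPA.mulVec_dotProduct_mulVec_mulVec hAs, dotProduct_smul, hxw, mulVec_smul,
    smul_dotProduct, dotProduct_smul, smul_eq_mul, smul_eq_mul, smul_eq_mul] at hvar
  linarith [mul_le_mul_of_nonneg_left hwAw hc]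

end IsMoorePenrose

theorem stmt_16_general {n : ℕ}
    (AG AH : Matrix (Fin n) (Fin n) ℝ)
    (hG : IsWeightedGraph AG)
    (hH : IsWeightedGraph AH)
    (ε : ℝ) (hε0 : 0 ≤ ε) (hε1 : ε < 1)
    (hsp : IsSparsifier (Lap AG) (Lap AH) ε)
    (LGp LHp : Matrix (Fin n) (Fin n) ℝ)
    (hLGp : IsMoorePenrose (Lap AG) LGp) (hLHp : IsMoorePenrose (Lap AH) LHp) :
    ∀ x : Fin n → ℝ,
      (1 / (1 + ε)) * (x ⬝ᵥ LGp.mulVec x) ≤ x ⬝ᵥ LHp.mulVec x ∧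
        x ⬝ᵥ LHp.mulVec x ≤ (1 / (1 - ε)) * (x ⬝ᵥ LGp.mulVec x) := by
  intro x
  have hLG := hG.posSemidef_Lap
  have hLH := hH.posSemidef_Lap
  have hsub : 0 < 1 - ε := by linarith
  have hadd : 0 < 1 + ε := by linarith
  have hkerGH : ∀ z, Lap AG *ᵥ z = 0 → Lap AH *ᵥ z = 0 := fun z =>
    hLH.mulVec_eq_zero_of_le fun y => (hsp y).2
  have hkerHG : ∀ z, Lap AH *ᵥ z = 0 → Lap AG *ᵥ z = 0 := fun z =>
    hLG.mulVec_eq_zero_of_le fun y => (le_inv_mul_iff₀ hsub).mpr (hsp y).1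
  have hlower := hLHp.mul_dotProduct_mulVec_le hLH (isSymm_Lap hG.1) hLGp hkerHG
    (inv_nonneg.mpr hadd.le) (fun y => (inv_mul_le_iff₀ hadd).mpr (hsp y).2) x
  have hupper := hLGp.mul_dotProduct_mulVec_le hLG (isSymm_Lap hH.1) hLHp hkerGH
    hsub.le (fun y => (hsp y).1) x
  refine ⟨by rwa [one_div], ?_⟩
  rwa [one_div, le_inv_mul_iff₀ hsub]

/-- quadratic forms of the pseudoinverses satisfy
`(1/(1+ε))·xᵀL_G⁺x ≤ xᵀL_H⁺x ≤ (1/(1−ε))·xᵀL_G⁺x`. -/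
theorem stmt_16 {n : ℕ} (hn : 2 ≤ n)
    (AG AH : Matrix (Fin n) (Fin n) ℝ)
    (hG : IsWeightedGraph AG) (hGc : GraphConnected AG)
    (hH : IsWeightedGraph AH)
    (ε : ℝ) (hε0 : 0 ≤ ε) (hε1 : ε < 1)
    (hsp : IsSparsifier (Lap AG) (Lap AH) ε)
    (LGp LHp : Matrix (Fin n) (Fin n) ℝ)
    (hLGp : IsMoorePenrose (Lap AG) LGp) (hLHp : IsMoorePenrose (Lap AH) LHp) :
    ∀ x : Fin n → ℝ,
      (1 / (1 + ε)) * (x ⬝ᵥ LGp.mulVec x) ≤ x ⬝ᵥ LHp.mulVec x ∧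
        x ⬝ᵥ LHp.mulVec x ≤ (1 / (1 - ε)) * (x ⬝ᵥ LGp.mulVec x) :=
  stmt_16_general AG AH hG hH ε hε0 hε1 hsp LGp LHp hLGp hLHp
end
end

section
/- Let G be a connected weighted graph on n ≥ 2 vertices with Laplacian L_G, and for an edge e = (i,j) let b_e = χ_i − χ_j and let R_e = b_eᵀ·L_G⁺·b_e be its effective resistance. Then the weighted sum of effective resistances over all edges equals n − 1, i.e., (1/2)·Σ_{i,j} A_G(i,j)·(χ_i − χ_j)ᵀ·L_G⁺·(χ_i − χ_j) = n − 1. -/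
open Matrix BigOperators Finset
open scoped Classical

noncomputable section

section aux
variable {n : ℕ}

lemma lap_symm (A : Matrix (Fin n) (Fin n) ℝ) (hA : A.IsSymm) : (Lap A).IsSymm := by
  unfold Lap
  rw [Matrix.IsSymm] at *
  rw [Matrix.transpose_sub, Matrix.diagonal_transpose, hA]

lemma lap_row_sum (A : Matrix (Fin n) (Fin n) ℝ) (i : Fin n) :
    ∑ j, Lap A i j = 0 := by
  simp [Lap, Matrix.diagonal_apply, Finset.sum_sub_distrib]

lemma lap_col_sum (A : Matrix (Fin n) (Fin n) ℝ) (hA : A.IsSymm) (j : Fin n) :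
    ∑ i, Lap A i j = 0 := by
  have h := lap_row_sum A j
  rw [← h]
  apply Finset.sum_congr rfl
  intro i _
  have := (lap_symm A hA).apply i j
  rw [this]

lemma lap_apply (A : Matrix (Fin n) (Fin n) ℝ) (i k : Fin n) :
    Lap A i k = (if i = k then (∑ j, A i j) else 0) - A i k := by
  simp [Lap, Matrix.diagonal_apply]

/-- quadratic form identity -/
lemma quad_form (A : Matrix (Fin n) (Fin n) ℝ) (hA : A.IsSymm) (x : Fin n → ℝ) :
    x ⬝ᵥ (Lap A).mulVec x = (1/2) * ∑ i, ∑ j, A i j * (x i - x j)^2 := by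
  have hAs : ∀ i j, A j i = A i j := fun i j => hA.apply i j
  have hswap : ∀ f : Fin n → Fin n → ℝ,
      (∑ i, ∑ j, A i j * f i j) = (∑ i, ∑ j, A i j * f j i) := by
    intro f
    rw [Finset.sum_comm]
    apply Finset.sum_congr rfl; intro i _
    apply Finset.sum_congr rfl; intro j _
    rw [hAs i j]
  have h1 : x ⬝ᵥ (Lap A).mulVec x
      = (∑ i, ∑ j, A i j * (x i)^2) - ∑ i, ∑ j, A i j * (x i * x j) := by
    simp only [dotProduct, mulVec, Lap, Matrix.sub_apply, Matrix.diagonal_apply]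
    rw [← Finset.sum_sub_distrib]
    apply Finset.sum_congr rfl; intro i _
    rw [Finset.mul_sum]
    have key : ∀ j, x i * (((if i = j then ∑ k, A i k else 0) - A i j) * x j)
        = (if i = j then (∑ k, A i k) * (x i * x j) else 0) - A i j * (x i * x j) := by
      intro j; by_cases h : i = j <;> simp [h] <;> ring
    calc ∑ j, x i * (((if i = j then ∑ k, A i k else 0) - A i j) * x j)
        = ∑ j, ((if i = j then (∑ k, A i k) * (x i * x j) else 0) - A i j * (x i * x j)) :=
          Finset.sum_congr rfl fun j _ => key j
      _ = (∑ k, A i k) * (x i * x i) - ∑ j, A i j * (x i * x j) := by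
          rw [Finset.sum_sub_distrib, Finset.sum_ite_eq]
          simp
      _ = (∑ j, A i j * (x i)^2) - ∑ j, A i j * (x i * x j) := by
          rw [Finset.sum_mul]
          congr 1
          exact Finset.sum_congr rfl fun j _ => by ring
  have h2 : (∑ i, ∑ j, A i j * (x j)^2) = ∑ i, ∑ j, A i j * (x i)^2 := hswap _
  have h3 : (∑ i, ∑ j, A i j * (x j * x i)) = ∑ i, ∑ j, A i j * (x i * x j) := hswap _
  have hexp : (∑ i, ∑ j, A i j * (x i - x j)^2)
      = (∑ i, ∑ j, A i j * (x i)^2) + (∑ i, ∑ j, A i j * (x j)^2)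
        - 2 * ∑ i, ∑ j, A i j * (x i * x j) := by
    rw [← Finset.sum_add_distrib, Finset.mul_sum, ← Finset.sum_sub_distrib]
    apply Finset.sum_congr rfl; intro i _
    rw [← Finset.sum_add_distrib, Finset.mul_sum, ← Finset.sum_sub_distrib]
    apply Finset.sum_congr rfl; intro j _
    ring
  rw [h1, hexp, h2]
  ring

lemma lap_mulVec_one (A : Matrix (Fin n) (Fin n) ℝ) :
    (Lap A).mulVec (fun _ => 1) = 0 := by
  funext i
  simp [mulVec, dotProduct, lap_row_sum A i]

/-- kernel vectors are constant -/
lemma ker_const (A : Matrix (Fin n) (Fin n) ℝ) (hG : IsWeightedGraph A)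
    (hGc : GraphConnected A) (x : Fin n → ℝ) (hx : (Lap A).mulVec x = 0) :
    ∀ i j, x i = x j := by
  obtain ⟨hA, hpos, hdiag⟩ := hG
  have hq : (1/2 : ℝ) * ∑ i, ∑ j, A i j * (x i - x j)^2 = 0 := by
    rw [← quad_form A hA x, hx]
    simp
  have hsum : ∑ i, ∑ j, A i j * (x i - x j)^2 = 0 := by linarith
  have hterm : ∀ i j, A i j * (x i - x j)^2 = 0 := by
    intro i j
    have hnn : ∀ i' ∈ Finset.univ, (0:ℝ) ≤ ∑ j', A i' j' * (x i' - x j')^2 := by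
      intro i' _
      exact Finset.sum_nonneg fun j' _ => mul_nonneg (hpos i' j') (sq_nonneg _)
    have h1 := (Finset.sum_eq_zero_iff_of_nonneg hnn).mp hsum i (Finset.mem_univ i)
    have hnn2 : ∀ j' ∈ Finset.univ, (0:ℝ) ≤ A i j' * (x i - x j')^2 :=
      fun j' _ => mul_nonneg (hpos i j') (sq_nonneg _)
    exact (Finset.sum_eq_zero_iff_of_nonneg hnn2).mp h1 j (Finset.mem_univ j)
  have hadj : ∀ i j, 0 < A i j → x i = x j := by
    intro i j hij
    have := hterm i j
    have h2 : (x i - x j)^2 = 0 := by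
      rcases mul_eq_zero.mp this with h | h
      · exact absurd h (ne_of_gt hij)
      · exact h
    have := sq_eq_zero_iff.mp h2
    linarith
  intro i j
  have hconn : (SimpleGraph.fromRel (fun i j => 0 < A i j)).Connected := hGc
  obtain ⟨w⟩ := hconn.preconnected i j
  induction w with
  | nil => rfl
  | cons h p ih =>
    rename_i a b c
    have hab : x a = x b := by
      rcases h.2 with h' | h'
      · exact hadj a b h'
      · exact (hadj b a h').symm
    rw [hab]; exact ih

abbrev sumF : (Fin n → ℝ) →ₗ[ℝ] ℝ where
  toFun x := ∑ i, x i
  map_add' x y := by simp [Finset.sum_add_distrib]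
  map_smul' c x := by simp [Finset.mul_sum]

lemma range_lap (A : Matrix (Fin n) (Fin n) ℝ) (hn : 1 ≤ n) (hG : IsWeightedGraph A)
    (hGc : GraphConnected A) :
    LinearMap.range (Lap A).mulVecLin = LinearMap.ker (sumF (n := n)) := by
  have hA := hG.1
  -- range ⊆ ker sumF
  have hle : LinearMap.range (Lap A).mulVecLin ≤ LinearMap.ker (sumF (n := n)) := by
    rintro y ⟨x, rfl⟩
    simp only [LinearMap.mem_ker]
    show (∑ i, (Lap A).mulVec x i) = 0
    simp only [mulVec, dotProduct]
    rw [Finset.sum_comm]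
    apply Finset.sum_eq_zero
    intro j _
    rw [← Finset.sum_mul, lap_col_sum A hA j, zero_mul]
  -- kernel of Lap = span of const 1
  have hone : (fun _ => (1:ℝ) : Fin n → ℝ) ≠ 0 := by
    intro h
    have := congrFun h ⟨0, hn⟩
    simp at this
  have hker : LinearMap.ker (Lap A).mulVecLin = Submodule.span ℝ {(fun _ => (1:ℝ) : Fin n → ℝ)} := by
    apply le_antisymm
    · intro x hx
      simp only [LinearMap.mem_ker, mulVecLin_apply] at hx
      have hc := ker_const A hG hGc x hx
      have : x = x ⟨0, hn⟩ • (fun _ => (1:ℝ)) := by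
        funext i
        simp [hc i ⟨0, hn⟩]
      rw [this]
      exact Submodule.smul_mem _ _ (Submodule.mem_span_singleton_self _)
    · rw [Submodule.span_singleton_le_iff_mem]
      simp only [LinearMap.mem_ker, mulVecLin_apply]
      exact lap_mulVec_one A
  have hkerdim : Module.finrank ℝ (LinearMap.ker (Lap A).mulVecLin) = 1 := by
    rw [hker]
    exact finrank_span_singleton hone
  have hrn := LinearMap.finrank_range_add_finrank_ker (Lap A).mulVecLin
  have hdim : Module.finrank ℝ (Fin n → ℝ) = n := by simp
  -- dimension of ker sumF
  have hsurF : LinearMap.range (sumF (n := n)) = ⊤ := by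
    rw [LinearMap.range_eq_top]
    intro r
    exact ⟨Pi.single ⟨0, hn⟩ r, by simp [sumF, Pi.single_apply]⟩
  have hrnF := LinearMap.finrank_range_add_finrank_ker (sumF (n := n))
  rw [hsurF] at hrnF
  have htop : Module.finrank ℝ (⊤ : Submodule ℝ ℝ) = 1 := by simp
  have hWdim : Module.finrank ℝ (LinearMap.ker (sumF (n := n))) = n - 1 := by
    rw [htop, hdim] at hrnF; omega
  rw [hkerdim, hdim] at hrn
  apply Submodule.eq_of_le_of_finrank_eq hle
  rw [hWdim]
  omega

end aux


lemma single_dot {n : ℕ} (w : Fin n → ℝ) (i : Fin n) :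
    (Pi.single i 1 : Fin n → ℝ) ⬝ᵥ w = w i := by
  simp [dotProduct, Pi.single_apply]

lemma mulVec_single' {n : ℕ} (M : Matrix (Fin n) (Fin n) ℝ) (j : Fin n) (i : Fin n) :
    M.mulVec (Pi.single j 1) i = M i j := by
  simp [Matrix.mulVec, dotProduct, Pi.single_apply]

lemma swapA {n : ℕ} (A : Matrix (Fin n) (Fin n) ℝ) (hA : A.IsSymm)
    (f : Fin n → Fin n → ℝ) :
    (∑ i, ∑ j, A i j * f i j) = (∑ i, ∑ j, A i j * f j i) := by
  rw [Finset.sum_comm]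
  apply Finset.sum_congr rfl; intro i _
  apply Finset.sum_congr rfl; intro j _
  rw [hA.apply i j]

/-- the weighted sum of effective resistances over all edges equals `n − 1`:
`(1/2)·Σ_{i,j} A_G(i,j)·(χ_i − χ_j)ᵀ·L_G⁺·(χ_i − χ_j) = n − 1`. -/
theorem stmt_17 {n : ℕ} (hn : 2 ≤ n)
    (AG : Matrix (Fin n) (Fin n) ℝ)
    (hG : IsWeightedGraph AG) (hGc : GraphConnected AG)
    (Lp : Matrix (Fin n) (Fin n) ℝ) (hLp : IsMoorePenrose (Lap AG) Lp) :
    (1 / 2 : ℝ) * ∑ i : Fin n, ∑ j : Fin n,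
        AG i j *
          ((Pi.single i 1 - Pi.single j 1) ⬝ᵥ
            Lp.mulVec (Pi.single i 1 - Pi.single j 1)) =
      (n : ℝ) - 1 := by
  obtain ⟨hA, hpos, hdiag⟩ := hG
  have hn0 : (n:ℝ) ≠ 0 := by
    have : (0:ℝ) < n := by exact_mod_cast Nat.lt_of_lt_of_le (by norm_num) hn
    linarith
  have hn1 : 1 ≤ n := by omega
  set L := Lap AG with hLdef
  obtain ⟨h1, h2, h3, h4⟩ := hLp
  have hPsymm : ∀ i j, (L * Lp) j i = (L * Lp) i j := fun i j => h3.apply i j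
  -- row sums of P := L * Lp vanish
  have hPone : ∀ i, (∑ j, (L * Lp) i j) = 0 := by
    intro i
    calc (∑ j, (L * Lp) i j) = ∑ j, (L * Lp) j i :=
          Finset.sum_congr rfl fun j _ => (hPsymm i j).symm
      _ = ∑ j, ∑ k, L j k * Lp k i := by
          apply Finset.sum_congr rfl; intro j _; rw [Matrix.mul_apply]
      _ = ∑ k, (∑ j, L j k) * Lp k i := by
          rw [Finset.sum_comm]
          exact Finset.sum_congr rfl fun k _ => (Finset.sum_mul _ _ _).symm
      _ = 0 := by
          apply Finset.sum_eq_zero; intro k _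
          rw [lap_col_sum AG hA k, zero_mul]
  -- P acts as identity on mean-zero vectors
  have hPy : ∀ y : Fin n → ℝ, (∑ i, y i) = 0 → (L * Lp).mulVec y = y := by
    intro y hy
    have hmem : y ∈ LinearMap.range L.mulVecLin := by
      rw [range_lap AG hn1 ⟨hA, hpos, hdiag⟩ hGc]
      exact hy
    obtain ⟨z, hz⟩ := hmem
    simp only [mulVecLin_apply] at hz
    calc (L * Lp).mulVec y = (L * Lp).mulVec (L.mulVec z) := by rw [hz]
      _ = ((L * Lp) * L).mulVec z := Matrix.mulVec_mulVec _ _ _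
      _ = L.mulVec z := by rw [h1]
      _ = y := hz
  -- entries of P
  have hPent : ∀ i j, (L * Lp) i j = (if i = j then 1 else 0) - (n:ℝ)⁻¹ := by
    intro i j
    have hy : (∑ k, ((Pi.single j 1 : Fin n → ℝ) k - (n:ℝ)⁻¹)) = 0 := by
      rw [Finset.sum_sub_distrib]
      simp [Finset.card_univ, mul_inv_cancel₀ hn0]
    have hsplit : (Pi.single j 1 : Fin n → ℝ)
        = (fun k => (Pi.single j 1 : Fin n → ℝ) k - (n:ℝ)⁻¹) + (fun _ => (n:ℝ)⁻¹) := by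
      funext k; simp
    have hconst : (L * Lp).mulVec (fun _ => (n:ℝ)⁻¹) i = 0 := by
      simp only [Matrix.mulVec, dotProduct]
      rw [← Finset.sum_mul, hPone i, zero_mul]
    calc (L * Lp) i j = (L * Lp).mulVec (Pi.single j 1) i := (mulVec_single' _ _ _).symm
      _ = (L * Lp).mulVec ((fun k => (Pi.single j 1 : Fin n → ℝ) k - (n:ℝ)⁻¹)
            + (fun _ => (n:ℝ)⁻¹)) i := by rw [← hsplit]
      _ = (L * Lp).mulVec (fun k => (Pi.single j 1 : Fin n → ℝ) k - (n:ℝ)⁻¹) i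
            + (L * Lp).mulVec (fun _ => (n:ℝ)⁻¹) i := by rw [Matrix.mulVec_add]; rfl
      _ = ((Pi.single j 1 : Fin n → ℝ) i - (n:ℝ)⁻¹) + 0 := by
          rw [hPy _ hy, hconst]
      _ = (if i = j then 1 else 0) - (n:ℝ)⁻¹ := by
          rw [add_zero, Pi.single_apply]
  -- trace of P
  have htr : (∑ i, (L * Lp) i i) = (n:ℝ) - 1 := by
    calc (∑ i, (L * Lp) i i) = ∑ i : Fin n, (1 - (n:ℝ)⁻¹) := by
          apply Finset.sum_congr rfl; intro i _; rw [hPent i i]; simp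
      _ = (n:ℝ) * (1 - (n:ℝ)⁻¹) := by
          rw [Finset.sum_const, Finset.card_univ, Fintype.card_fin, nsmul_eq_mul]
      _ = (n:ℝ) - 1 := by field_simp
  -- expansion of the quadratic form on edge vectors
  have hexp : ∀ i j, ((Pi.single i 1 - Pi.single j 1 : Fin n → ℝ) ⬝ᵥ
      Lp.mulVec (Pi.single i 1 - Pi.single j 1))
      = Lp i i - Lp i j - Lp j i + Lp j j := by
    intro i j
    rw [Matrix.mulVec_sub, sub_dotProduct, dotProduct_sub, dotProduct_sub,
      single_dot, single_dot, single_dot, single_dot]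
    have e1 : Lp.mulVec (Pi.single i 1) i = Lp i i := mulVec_single' _ _ _
    have e2 : Lp.mulVec (Pi.single j 1) i = Lp i j := mulVec_single' _ _ _
    have e3 : Lp.mulVec (Pi.single i 1) j = Lp j i := mulVec_single' _ _ _
    have e4 : Lp.mulVec (Pi.single j 1) j = Lp j j := mulVec_single' _ _ _
    rw [e1, e2, e3, e4]; ring
  -- the main computation
  have hmain : (1 / 2 : ℝ) * (∑ i, ∑ j, AG i j *
      ((Pi.single i 1 - Pi.single j 1 : Fin n → ℝ) ⬝ᵥ
        Lp.mulVec (Pi.single i 1 - Pi.single j 1)))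
      = ∑ i, (L * Lp) i i := by
    have hrw : (∑ i, ∑ j, AG i j *
        ((Pi.single i 1 - Pi.single j 1 : Fin n → ℝ) ⬝ᵥ
          Lp.mulVec (Pi.single i 1 - Pi.single j 1)))
        = ∑ i, ∑ j, AG i j * (Lp i i - Lp i j - Lp j i + Lp j j) := by
      apply Finset.sum_congr rfl; intro i _
      apply Finset.sum_congr rfl; intro j _
      rw [hexp i j]
    rw [hrw]
    have hsplit4 : (∑ i, ∑ j, AG i j * (Lp i i - Lp i j - Lp j i + Lp j j))
        = (∑ i, ∑ j, AG i j * Lp i i) + (∑ i, ∑ j, AG i j * Lp j j)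
          - (∑ i, ∑ j, AG i j * Lp i j) - (∑ i, ∑ j, AG i j * Lp j i) := by
      rw [← Finset.sum_add_distrib, ← Finset.sum_sub_distrib, ← Finset.sum_sub_distrib]
      apply Finset.sum_congr rfl; intro i _
      rw [← Finset.sum_add_distrib, ← Finset.sum_sub_distrib, ← Finset.sum_sub_distrib]
      apply Finset.sum_congr rfl; intro j _
      ring
    have hT2 : (∑ i, ∑ j, AG i j * Lp j j) = ∑ i, ∑ j, AG i j * Lp i i :=
      (swapA AG hA (fun i _ => Lp i i)).symm
    have hT3 : (∑ i, ∑ j, AG i j * Lp i j) = ∑ i, ∑ j, AG i j * Lp j i :=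
      swapA AG hA (fun i j => Lp i j)
    have htrP : (∑ i, (L * Lp) i i)
        = (∑ i, ∑ j, AG i j * Lp i i) - (∑ i, ∑ j, AG i j * Lp j i) := by
      have : ∀ i, (L * Lp) i i
          = (∑ j, AG i j * Lp i i) - (∑ j, AG i j * Lp j i) := by
        intro i
        rw [Matrix.mul_apply]
        have : ∀ k, L i k * Lp k i
            = (if i = k then (∑ j, AG i j) * Lp k i else 0) - AG i k * Lp k i := by
          intro k
          rw [hLdef, lap_apply]
          by_cases h : i = k <;> simp [h] <;> ring
        rw [Finset.sum_congr rfl fun k _ => this k, Finset.sum_sub_distrib,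
          Finset.sum_ite_eq]
        simp [Finset.sum_mul]
      rw [Finset.sum_congr rfl fun i _ => this i, Finset.sum_sub_distrib]
    rw [hsplit4, hT2, hT3, htrP]
    ring
  rw [hmain, htr]
end
end
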